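/- arXiv:1710.07507 — 5 statements merged into one kernel-verified Lean document; each statement's English description precedes it below -/
import Mathlib

section
/- Let P_n be the path on n vertices and let k ≥ 2 be an integer with k ≤ n. Then for every j ∈ {k−1, …, n−1}, the number of subsets S ⊆ V(P_n) with |S| = k and Steiner distance d(S) = j equals (n−j)·C(j−1, k−2), where C(·,·) denotes binomial coefficients. -/
open Finset SimpleGraph Polynomial

/-- The Steiner distance of a vertex set `S`: the minimum number of edges of a
connected subgraph of `G` whose vertex set contains `S`. -/
noncomputable def steinerDist {V : Type*} (G : SimpleGraph V) (S : Set V) : ℕ :=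
  sInf {n | ∃ H : G.Subgraph, H.Connected ∧ S ⊆ H.verts ∧ H.edgeSet.ncard = n}

/-- The Steiner `k`-Wiener index. -/
noncomputable def SW {V : Type*} [Fintype V] [DecidableEq V] (k : ℕ) (G : SimpleGraph V) : ℕ :=
  ∑ S ∈ Finset.powersetCard k (Finset.univ : Finset V), steinerDist G (S : Set V)

/-- The Steiner `k`-hyper-Wiener index. -/
noncomputable def SWW {V : Type*} [Fintype V] [DecidableEq V] (k : ℕ) (G : SimpleGraph V) : ℝ :=
  (1/2) * ∑ S ∈ Finset.powersetCard k (Finset.univ : Finset V), (steinerDist G (S : Set V) : ℝ)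
    + (1/2) * ∑ S ∈ Finset.powersetCard k (Finset.univ : Finset V), (steinerDist G (S : Set V) : ℝ) ^ 2

/-- The Steiner `k`-Hosoya polynomial `∑_{m ≥ 0} d_k(G,m) x^m`, written as
`∑_{S ⊆ V(G), |S| = k} x^{d(S)}`. -/
noncomputable def SH {V : Type*} [Fintype V] [DecidableEq V] (k : ℕ) (G : SimpleGraph V) :
    Polynomial ℝ :=
  ∑ S ∈ Finset.powersetCard k (Finset.univ : Finset V), Polynomial.X ^ (steinerDist G (S : Set V))

/-- The Wiener index `W(G) = ∑_{{u,v} ⊆ V(G)} d(u,v)` (each unordered pair counted once). -/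
noncomputable def wiener {V : Type*} [Fintype V] [DecidableEq V] (G : SimpleGraph V) : ℝ :=
  (∑ p ∈ Finset.univ.offDiag, (G.dist p.1 p.2 : ℝ)) / 2

/-- `\overline{WW}(G) = ∑_{{u,v} ⊆ V(G)} d(u,v)²`. -/
noncomputable def WWbar {V : Type*} [Fintype V] [DecidableEq V] (G : SimpleGraph V) : ℝ :=
  (∑ p ∈ Finset.univ.offDiag, (G.dist p.1 p.2 : ℝ) ^ 2) / 2

/-- The set of ordered triples of pairwise distinct vertices. -/
def O3 (V : Type*) [Fintype V] [DecidableEq V] : Finset (V × V × V) :=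
  Finset.univ.filter fun t => t.1 ≠ t.2.1 ∧ t.1 ≠ t.2.2 ∧ t.2.1 ≠ t.2.2

/-- `\widehat{WW}(G) = ∑_{(u,v,w) ∈ O₃(G)} d(u,v)·d(u,w)`. -/
noncomputable def WWhat {V : Type*} [Fintype V] [DecidableEq V] (G : SimpleGraph V) : ℝ :=
  ∑ t ∈ O3 V, (G.dist t.1 t.2.1 : ℝ) * (G.dist t.1 t.2.2 : ℝ)

/-- `z` is a median of the triple `u, v, w`: it lies on a shortest `u,v`-path, a shortest
`u,w`-path and a shortest `v,w`-path. -/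
def IsMedian {V : Type*} (G : SimpleGraph V) (u v w z : V) : Prop :=
  G.dist u z + G.dist z v = G.dist u v ∧
  G.dist u z + G.dist z w = G.dist u w ∧
  G.dist v z + G.dist z w = G.dist v w

/-- A modular graph: a connected graph in which every triple of vertices has a median. -/
def IsModular {V : Type*} (G : SimpleGraph V) : Prop :=
  G.Connected ∧ ∀ u v w : V, ∃ z : V, IsMedian G u v w z

/-- The hypercube graph `Q_n` on `Fin n → Bool`: two vertices are adjacent iff they differ
in exactly one coordinate. -/
def hypercubeGraph (n : ℕ) : SimpleGraph (Fin n → Bool) :=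
  SimpleGraph.fromRel fun x y => ∃! i, x i ≠ y i

/-- A partial cube: a connected graph isometrically embeddable into a hypercube. -/
def IsPartialCube {V : Type*} (G : SimpleGraph V) : Prop :=
  G.Connected ∧ ∃ (n : ℕ) (f : V → (Fin n → Bool)),
    ∀ u v : V, (hypercubeGraph n).dist (f u) (f v) = G.dist u v

/-- The Djoković–Winkler relation Θ on (edges viewed as) unordered pairs:
`s(u₁,v₁) Θ s(u₂,v₂)` iff `d(u₁,u₂) + d(v₁,v₂) ≠ d(u₁,v₂) + d(v₁,u₂)`. -/
def theta {V : Type*} (G : SimpleGraph V) (e f : Sym2 V) : Prop :=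
  ∃ u₁ v₁ u₂ v₂ : V, e = s(u₁, v₁) ∧ f = s(u₂, v₂) ∧
    G.dist u₁ u₂ + G.dist v₁ v₂ ≠ G.dist u₁ v₂ + G.dist v₁ u₂

/-- `E` together with the component data `U`, `U'` is the family of Θ-classes of the
partial cube `G`: each `E i` is a Θ-class of edges, the classes are pairwise distinct and
cover the edge set, and `U i`, `U' i` are (the vertex sets of) the two connected components
of `G - E i`. -/
def IsThetaClassSetup {V : Type*} (G : SimpleGraph V) (d : ℕ)
    (E : Fin d → Set (Sym2 V)) (U U' : Fin d → Set V) : Prop :=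
  (∀ i, ∃ e ∈ G.edgeSet, E i = {f | f ∈ G.edgeSet ∧ theta G f e}) ∧
  Function.Injective E ∧
  G.edgeSet = ⋃ i, E i ∧
  ∀ i, ∃ c c' : (G.deleteEdges (E i)).ConnectedComponent, c ≠ c' ∧
    U i = c.supp ∧ U' i = c'.supp ∧
    ∀ b : (G.deleteEdges (E i)).ConnectedComponent, b = c ∨ b = c'

/-!
In `P_n` a walk from `a` to `b > a` must cross every edge `{m, m + 1}` with `a ≤ m < b`, so a
connected subgraph containing `S` has at least `max S - min S` edges, and the subpath from
`min S` to `max S` attains this: `d(S) = max S - min S`. A `k`-set with `d(S) = j` is therefore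
a choice of its minimum `i < n - j` together with `k - 2` of the `j - 1` points strictly
between `i` and `i + j`.
-/

namespace SimpleGraph

variable {n : ℕ}

lemma injOn_inf_edgeSet_pathGraph : Set.InjOn Sym2.inf (pathGraph n).edgeSet := by
  intro e he e' he' h
  induction e with | _ x y => induction e' with | _ x' y' =>
  simp only [mem_edgeSet, pathGraph_adj, Sym2.inf_mk] at he he' h
  rw [Sym2.eq_iff, Fin.ext_iff, Fin.ext_iff, Fin.ext_iff, Fin.ext_iff]
  have hmin := congrArg Fin.val h
  rw [Fin.coe_min, Fin.coe_min] at hmin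
  omega

lemma Walk.exists_mem_edges_inf_eq_of_le_of_lt {u v : Fin n} (p : (pathGraph n).Walk u v)
    {m : Fin n} (hum : u ≤ m) (hmv : m < v) : ∃ e ∈ p.edges, e.inf = m := by
  induction p with
  | nil => exact absurd (hum.trans_lt hmv) (lt_irrefl _)
  | @cons u w v huw q ih =>
    by_cases hwm : w ≤ m
    · obtain ⟨e, he, rfl⟩ := ih hwm hmv
      exact ⟨e, List.mem_cons_of_mem _ he, rfl⟩
    · refine ⟨s(u, w), List.mem_cons_self, ?_⟩
      rw [pathGraph_adj] at huw
      rw [Fin.le_def] at hum hwm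
      rw [Sym2.inf_mk, Fin.ext_iff, Fin.coe_min]
      omega

lemma Subgraph.Connected.sub_le_ncard_edgeSet {H : (pathGraph n).Subgraph} (hH : H.Connected)
    {a b : Fin n} (ha : a ∈ H.verts) (hb : b ∈ H.verts) : (b : ℕ) - a ≤ H.edgeSet.ncard := by
  obtain ⟨p, hp⟩ := (Subgraph.preconnected_iff_forall_exists_walk_subgraph H).mp
    hH.preconnected ha hb
  have hIco : Set.Ico a b ⊆ Sym2.inf '' H.edgeSet := by
    rintro m ⟨ham, hmb⟩
    obtain ⟨e, he, rfl⟩ := p.exists_mem_edges_inf_eq_of_le_of_lt ham hmb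
    exact ⟨e, Subgraph.edgeSet_mono hp (by simpa using he), rfl⟩
  calc (b : ℕ) - a = (Set.Ico a b).ncard := by
        rw [← Finset.coe_Ico, Set.ncard_coe_finset, Fin.card_Ico]
    _ ≤ (Sym2.inf '' H.edgeSet).ncard := Set.ncard_le_ncard hIco
    _ ≤ H.edgeSet.ncard := Set.ncard_image_le

def pathGraphHomInduceIcc (a b : Fin n) (hab : a ≤ b) :
    pathGraph ((b : ℕ) - a + 1) →g (pathGraph n).induce (Set.Icc a b) where
  toFun i := ⟨⟨a + i, by omega⟩, by simp only [Set.mem_Icc, Fin.le_def]; omega⟩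
  map_rel' := by
    intro i i' h
    simp only [pathGraph_adj, comap_adj, Function.Embedding.subtype_apply] at h ⊢
    omega

lemma connected_induce_Icc_pathGraph {a b : Fin n} (hab : a ≤ b) :
    ((⊤ : (pathGraph n).Subgraph).induce (Set.Icc a b)).Connected := by
  rw [← connected_induce_iff]
  refine (pathGraph_connected _).map (pathGraphHomInduceIcc a b hab) ?_
  rintro ⟨x, hax, hxb⟩
  rw [Fin.le_def] at hax hxb
  exact ⟨⟨x - a, by omega⟩, by ext; simp only [pathGraphHomInduceIcc, RelHom.coeFn_mk]; omega⟩

lemma ncard_edgeSet_induce_Icc_pathGraph_le (a b : Fin n) :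
    ((⊤ : (pathGraph n).Subgraph).induce (Set.Icc a b)).edgeSet.ncard ≤ (b : ℕ) - a := by
  calc _ ≤ (Set.Ico a b).ncard := by
        refine Set.ncard_le_ncard_of_injOn Sym2.inf ?_
          (injOn_inf_edgeSet_pathGraph.mono (Subgraph.edgeSet_subset _)) (Set.toFinite _)
        intro e he
        induction e with | _ x y =>
        simp only [Subgraph.mem_edgeSet, Subgraph.induce_adj, Set.mem_Icc, Subgraph.top_adj,
          pathGraph_adj, Sym2.inf_mk, Set.mem_Ico, Fin.le_def, Fin.lt_def, Fin.coe_min] at he ⊢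
        omega
    _ = (b : ℕ) - a := by rw [← Finset.coe_Ico, Set.ncard_coe_finset, Fin.card_Ico]

end SimpleGraph

open SimpleGraph

theorem steinerDist_pathGraph_of_subset_Icc {n : ℕ} {S : Set (Fin n)} {a b : Fin n} (ha : a ∈ S)
    (hb : b ∈ S) (hS : S ⊆ Set.Icc a b) : steinerDist (pathGraph n) S = (b : ℕ) - a := by
  have hI := connected_induce_Icc_pathGraph (hS hb).1
  unfold steinerDist
  apply le_antisymm
  · exact (Nat.sInf_le (by exact ⟨_, hI, hS, rfl⟩)).trans
      (ncard_edgeSet_induce_Icc_pathGraph_le a b)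
  · refine le_csInf ⟨_, ⟨_, hI, hS, rfl⟩⟩ ?_
    rintro _ ⟨H, hH, hSH, rfl⟩
    exact hH.sub_le_ncard_edgeSet (hSH ha) (hSH hb)

theorem steinerDist_pathGraph {n : ℕ} {S : Finset (Fin n)} (hS : S.Nonempty) :
    steinerDist (pathGraph n) S = (S.max' hS : ℕ) - S.min' hS :=
  steinerDist_pathGraph_of_subset_Icc (S.min'_mem hS) (S.max'_mem hS)
    fun _ hx => ⟨S.min'_le _ hx, S.le_max' _ hx⟩

section SubsetsWithEndpoints

variable {α : Type*} [PartialOrder α] [LocallyFiniteOrder α] [DecidableEq α]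

def subsetsWithEndpoints (k : ℕ) (a b : α) : Finset (Finset α) :=
  {S ∈ powersetCard k (Icc a b) | {a, b} ⊆ S}

lemma card_subsetsWithEndpoints {k : ℕ} (hk : 2 ≤ k) {a b : α} (hab : a < b) :
    #(subsetsWithEndpoints k a b) = (#(Icc a b) - 2).choose (k - 2) := by
  rw [subsetsWithEndpoints, card_filter_powersetCard_subset, card_pair hab.ne]
  · simpa [insert_subset_iff] using hab.le
  · rwa [card_pair hab.ne]

lemma disjoint_subsetsWithEndpoints {k : ℕ} {a b a' b' : α} (ha : a ≠ a') :
    Disjoint (subsetsWithEndpoints k a b) (subsetsWithEndpoints k a' b') := by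
  simp only [Finset.disjoint_left, subsetsWithEndpoints, mem_filter, mem_powersetCard,
    insert_subset_iff, singleton_subset_iff]
  rintro S ⟨⟨hS, -⟩, haS, -⟩ ⟨⟨hS', -⟩, haS', -⟩
  exact ha (le_antisymm (mem_Icc.mp (hS haS')).1 (mem_Icc.mp (hS' haS)).1)

end SubsetsWithEndpoints

theorem filter_steinerDist_pathGraph_eq_biUnion {n k : ℕ} (hk : k ≠ 0) (j : ℕ) :
    (powersetCard k (univ : Finset (Fin n))).filter
        (fun S : Finset (Fin n) => steinerDist (pathGraph n) (S : Set (Fin n)) = j) =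
      univ.biUnion fun i : Fin (n - j) =>
        subsetsWithEndpoints k ⟨i, by omega⟩ ⟨i + j, by omega⟩ := by
  ext S
  simp only [mem_filter, mem_powersetCard, mem_biUnion, mem_univ, true_and, subset_univ,
    subsetsWithEndpoints, insert_subset_iff, singleton_subset_iff]
  constructor
  · rintro ⟨hcard, hdist⟩
    have hne : S.Nonempty := card_pos.mp (by omega)
    rw [steinerDist_pathGraph hne] at hdist
    have hmax_lt := (S.max' hne).isLt
    have hmin_le := Fin.le_def.mp (S.min'_le_max' hne)
    have hmax : S.max' hne = ⟨S.min' hne + j, by omega⟩ := Fin.ext (by dsimp only; omega)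
    refine ⟨⟨S.min' hne, by omega⟩, ⟨fun x hx => ?_, hcard⟩, S.min'_mem hne,
      hmax ▸ S.max'_mem hne⟩
    rw [← hmax, mem_Icc]
    exact ⟨S.min'_le x hx, S.le_max' x hx⟩
  · rintro ⟨i, ⟨hSI, hcard⟩, ha, hb⟩
    refine ⟨hcard, ?_⟩
    rw [steinerDist_pathGraph_of_subset_Icc ha hb (by rw [← coe_Icc]; exact_mod_cast hSI)]
    simp

open scoped Classical in
theorem count_steiner_dist_path_general (n k : ℕ) (hk : 2 ≤ k)
    (j : ℕ) (hj₁ : k - 1 ≤ j) :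
    ((Finset.powersetCard k (Finset.univ : Finset (Fin n))).filter
        (fun S => steinerDist (SimpleGraph.pathGraph n) (S : Set (Fin n)) = j)).card
      = (n - j) * Nat.choose (j - 1) (k - 2) := by
  -- The statement filters the image of `powersetCard` in `Finset (Set (Fin n))`, formed with
  -- the monad structure on `Finset`.
  rw [show (powersetCard k univ >>= fun S : Finset (Fin n) => (pure ↑S : Finset (Set (Fin n)))) =
      (powersetCard k univ).image ((↑) : Finset (Fin n) → Set (Fin n)) from
    sup_singleton_apply _ _, filter_image, card_image_of_injective _ coe_injective]
  have hdisj : ((univ : Finset (Fin (n - j))) : Set (Fin (n - j))).PairwiseDisjoint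
      fun i => subsetsWithEndpoints k (⟨i, by omega⟩ : Fin n) ⟨i + j, by omega⟩ :=
    fun i _ i' _ hii' => disjoint_subsetsWithEndpoints fun h => hii' (Fin.ext (by simpa using h))
  rw [filter_steinerDist_pathGraph_eq_biUnion (by omega), card_biUnion hdisj]
  calc _ = ∑ _i : Fin (n - j), (j - 1).choose (k - 2) := by
        refine sum_congr rfl fun i _ => ?_
        rw [card_subsetsWithEndpoints hk (Fin.mk_lt_mk.mpr (by omega)), Fin.card_Icc]
        congr 1
        dsimp only
        omega
    _ = _ := by simp

open scoped Classical in
/-- In the path `P_n`, for `k - 1 ≤ j ≤ n - 1`, the number of `k`-subsets of vertices with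
Steiner distance `j` equals `(n - j)·C(j-1, k-2)`. -/
theorem count_steiner_dist_path (n k : ℕ) (hk : 2 ≤ k) (hkn : k ≤ n)
    (j : ℕ) (hj₁ : k - 1 ≤ j) (hj₂ : j ≤ n - 1) :
    ((Finset.powersetCard k (Finset.univ : Finset (Fin n))).filter
        (fun S => steinerDist (SimpleGraph.pathGraph n) (S : Set (Fin n)) = j)).card
      = (n - j) * Nat.choose (j - 1) (k - 2) :=
  count_steiner_dist_path_general n k hk j hj₁
end

section
/- Let P_n be the path on n vertices and let k ≥ 2 be an integer with k ≤ n. Then the Steiner k-hyper-Wiener index of P_n equals SWW_k(P_n) = Σ_{j=k−1}^{n−1} (j(j+1)(n−j)/2)·C(j−1, k−2) = C(k,2)·C(n+2, k+2), where C(·,·) denotes binomial coefficients. -/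
open Finset SimpleGraph Polynomial

/-!
On a path, a vertex set lies on the geodesic between its two extreme vertices `a ≤ b`, and every
connected subgraph containing `a` and `b` has at least `d(a, b) = b - a` edges, so its Steiner
distance is `b - a`. A `k`-subset with extremes `a < b` is `{a, b} ∪ N` for a `(k - 2)`-subset `N`
of the open interval between them; hence exactly `(n - j) C(j - 1, k - 2)` of the `k`-subsets
have Steiner distance `j`. As `(d + d²) / 2 = C(d + 1, 2)` and
`C(j + 1, 2) C(j - 1, k - 2) = C(k, 2) C(j + 1, k)`, two applications of the hockey-stick
identity give `C(k, 2) C(n + 2, k + 2)`.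
-/

namespace Nat

theorem choose_two_mul_choose_sub_one (j m : ℕ) :
    (j + 1).choose 2 * (j - 1).choose m = (m + 2).choose 2 * (j + 1).choose (m + 2) := by
  rw [mul_comm ((m + 2).choose 2), choose_mul (by omega), Nat.add_sub_cancel,
    show j + 1 - 2 = j - 1 by omega]

theorem sum_range_choose_add_one (n r : ℕ) :
    ∑ j ∈ range n, (j + 1).choose (r + 1) = (n + 1).choose (r + 2) := by
  induction n with
  | zero => exact (choose_eq_zero_of_lt (by omega)).symm
  | succ n ih => rw [sum_range_succ, ih, choose_succ_succ (n + 1) (r + 1), add_comm]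

theorem sum_range_sub_mul_choose_add_one (n r : ℕ) :
    ∑ j ∈ range n, (n - j) * (j + 1).choose (r + 1) = (n + 2).choose (r + 3) := by
  induction n with
  | zero => exact (choose_eq_zero_of_lt (by omega)).symm
  | succ n ih =>
    calc ∑ j ∈ range (n + 1), (n + 1 - j) * (j + 1).choose (r + 1)
        = ∑ j ∈ range (n + 1), ((n - j) * (j + 1).choose (r + 1) + (j + 1).choose (r + 1)) :=
          sum_congr rfl fun j hj => by
            rw [show n + 1 - j = n - j + 1 by rw [mem_range] at hj; omega, add_one_mul]
      _ = (n + 2).choose (r + 3) + (n + 2).choose (r + 2) := by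
          rw [sum_add_distrib, sum_range_succ, ih, sum_range_choose_add_one, Nat.sub_self,
            zero_mul, add_zero]
      _ = (n + 3).choose (r + 3) := by rw [add_comm, choose_succ_succ (n + 2) (r + 2)]

theorem sum_Ico_sub_mul_choose_two_mul_choose (n m : ℕ) :
    ∑ j ∈ Ico 1 n, (n - j) * ((j + 1).choose 2 * (j - 1).choose m) =
      (m + 2).choose 2 * (n + 2).choose (m + 4) := by
  rw [sum_subset (s₂ := range n) (fun j hj => by rw [mem_Ico] at hj; rw [mem_range]; omega)
      fun j hj hj' => by
        obtain rfl : j = 0 := by rw [mem_range] at hj; rw [mem_Ico] at hj'; omega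
        simp,
    ← sum_range_sub_mul_choose_add_one n (m + 1), mul_sum]
  refine sum_congr rfl fun j _ => ?_
  rw [choose_two_mul_choose_sub_one]
  ring

end Nat

namespace Finset

variable {α : Type*} [LinearOrder α]

theorem filter_insert_insert_lt_lt {a b : α} {N : Finset α} (hN : ∀ x ∈ N, a < x ∧ x < b) :
    (insert a (insert b N)).filter (fun x => a < x ∧ x < b) = N := by
  ext x
  simp only [mem_filter, mem_insert]
  constructor
  · rintro ⟨rfl | rfl | hx, hax, hxb⟩
    · exact absurd hax (lt_irrefl _)
    · exact absurd hxb (lt_irrefl _)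
    · exact hx
  · exact fun hx => ⟨.inr (.inr hx), hN x hx⟩

theorem coe_insert_insert_subset_Icc {a b : α} {N : Finset α} (hab : a ≤ b)
    (hN : ∀ x ∈ N, a < x ∧ x < b) : ↑(insert a (insert b N)) ⊆ Set.Icc a b := by
  intro x hx
  simp only [coe_insert, Set.mem_insert_iff, mem_coe] at hx
  rcases hx with rfl | rfl | hx
  exacts [⟨le_rfl, hab⟩, ⟨hab, le_rfl⟩, ⟨(hN x hx).1.le, (hN x hx).2.le⟩]

theorem sum_powersetCard_add_two {M : Type*} [AddCommMonoid M] (s : Finset α) (m : ℕ)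
    (f : Finset α → M) :
    ∑ T ∈ s.powersetCard (m + 2), f T =
      ∑ p ∈ (s ×ˢ s).filter (fun p => p.1 < p.2),
        ∑ N ∈ (s.filter fun x => p.1 < x ∧ x < p.2).powersetCard m,
          f (insert p.1 (insert p.2 N)) := by
  rw [sum_sigma']
  symm
  refine sum_bij (fun x _ => insert x.1.1 (insert x.1.2 x.2)) ?_ ?_ ?_ (fun _ _ => rfl)
  · rintro ⟨⟨a, b⟩, N⟩ hx
    simp only [mem_sigma, mem_filter, mem_product, mem_powersetCard, subset_iff] at hx
    obtain ⟨⟨⟨ha, hb⟩, hab⟩, hN, rfl⟩ := hx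
    have haN : a ∉ N := fun h => lt_irrefl a (hN h).2.1
    have hbN : b ∉ N := fun h => lt_irrefl b (hN h).2.2
    rw [mem_powersetCard, card_insert_of_notMem (by simp [hab.ne, haN]),
      card_insert_of_notMem hbN]
    refine ⟨fun x hx => ?_, rfl⟩
    simp only [mem_insert] at hx
    rcases hx with rfl | rfl | hx
    exacts [ha, hb, (hN hx).1]
  · rintro ⟨⟨a, b⟩, N⟩ hx ⟨⟨a', b'⟩, N'⟩ hx' h
    simp only [mem_sigma, mem_filter, mem_product, mem_powersetCard] at hx hx'
    dsimp only at h
    obtain ⟨⟨-, hab⟩, hN, -⟩ := hx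
    obtain ⟨⟨-, hab'⟩, hN', -⟩ := hx'
    replace hN : ∀ x ∈ N, a < x ∧ x < b := fun x hx => (mem_filter.1 (hN hx)).2
    replace hN' : ∀ x ∈ N', a' < x ∧ x < b' := fun x hx => (mem_filter.1 (hN' hx)).2
    have hI := coe_insert_insert_subset_Icc hab.le hN
    have hI' := coe_insert_insert_subset_Icc hab'.le hN'
    rw [h] at hI
    obtain rfl : a = a' := le_antisymm (@hI a' (by simp)).1 (@hI' a (by simp [← h])).1
    obtain rfl : b = b' := le_antisymm (@hI' b (by simp [← h])).2 (@hI b' (by simp)).2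
    rw [← filter_insert_insert_lt_lt hN, h, filter_insert_insert_lt_lt hN']
  · intro T hT
    rw [mem_powersetCard] at hT
    have hne : T.Nonempty := card_pos.1 (by omega)
    have hlt := min'_lt_max'_of_card T (by omega)
    set a := T.min' hne
    set b := T.max' hne
    have hT_eq : insert a (insert b (T.filter fun x => a < x ∧ x < b)) = T := by
      ext x
      simp only [mem_insert, mem_filter]
      constructor
      · rintro (rfl | rfl | ⟨hx, -⟩)
        exacts [min'_mem T hne, max'_mem T hne, hx]
      · intro hx
        rcases (min'_le T x hx).eq_or_lt with h | h
        · exact .inl h.symm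
        rcases (le_max' T x hx).eq_or_lt with h' | h'
        · exact .inr (.inl h')
        · exact .inr (.inr ⟨hx, h, h'⟩)
    refine ⟨⟨(a, b), T.filter fun x => a < x ∧ x < b⟩, ?_, hT_eq⟩
    simp only [mem_sigma, mem_filter, mem_product, mem_powersetCard]
    refine ⟨⟨⟨hT.1 (min'_mem T hne), hT.1 (max'_mem T hne)⟩, hlt⟩, filter_subset_filter _ hT.1, ?_⟩
    have := hT.2
    rw [← hT_eq, card_insert_of_notMem (by simp [hlt.ne]), card_insert_of_notMem (by simp)] at this
    omega

end Finset

namespace Fin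

theorem card_filter_lt_sub_eq {n j : ℕ} (hj : 0 < j) :
    #{p ∈ (univ : Finset (Fin n × Fin n)) | p.1 < p.2 ∧ (p.2 : ℕ) - p.1 = j} = n - j := by
  rw [← card_range (n - j)]
  symm
  refine card_bij (fun a ha => (⟨a, by rw [mem_range] at ha; omega⟩, ⟨a + j, by rw [mem_range] at ha; omega⟩))
    (fun a ha => by simp only [mem_filter, mem_univ, true_and, Fin.lt_def]; omega)
    (fun a _ b _ h => by simpa using h) ?_
  rintro ⟨a, b⟩ hp
  simp only [mem_filter, mem_univ, true_and, Fin.lt_def] at hp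
  exact ⟨a, by rw [mem_range]; omega, Prod.ext rfl (Fin.ext (by dsimp only; omega))⟩

theorem sum_filter_lt_eq_sum_Ico {M : Type*} [AddCommMonoid M] (n : ℕ) (F : ℕ → M) :
    ∑ p ∈ (univ : Finset (Fin n × Fin n)) with p.1 < p.2, F (p.2 - p.1) =
      ∑ j ∈ Ico 1 n, (n - j) • F j := by
  rw [← sum_fiberwise_of_maps_to (g := fun p => (p.2 : ℕ) - p.1) (t := Ico 1 n)
    (fun p hp => by simp only [mem_filter, mem_univ, true_and, Fin.lt_def, mem_Ico] at hp ⊢; omega)]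
  refine sum_congr rfl fun j hj => ?_
  rw [sum_congr rfl fun p hp => congrArg F (mem_filter.1 hp).2, Finset.sum_const, filter_filter,
    card_filter_lt_sub_eq (mem_Ico.1 hj).1]

end Fin

namespace SimpleGraph

section

variable {V : Type*} {G : SimpleGraph V}

theorem Subgraph.Connected.dist_le_ncard_edgeSet [Finite V] {H : G.Subgraph} (hH : H.Connected)
    {u v : V} (hu : u ∈ H.verts) (hv : v ∈ H.verts) : G.dist u v ≤ H.edgeSet.ncard := by
  classical
  have : Fintype V := Fintype.ofFinite V
  obtain ⟨p, hp, -⟩ :=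
    ((hH.coe ⟨u, hu⟩ ⟨v, hv⟩).map H.coeEmbeddingSpanningCoe.toHom).exists_path_of_dist
  calc G.dist u v ≤ (p.mapLe H.spanningCoe_le).length := dist_le _
    _ = p.length := p.length_mapLe _
    _ ≤ #H.spanningCoe.edgeFinset := hp.isTrail.length_le_card_edgeFinset
    _ = H.edgeSet.ncard := by
      rw [← Set.ncard_coe_finset, coe_edgeFinset, Subgraph.edgeSet_spanningCoe]

theorem steinerDist_eq_dist_of_length_eq [Finite V] {S : Set V} {u v : V} (p : G.Walk u v)
    (hp : p.length = G.dist u v) (hu : u ∈ S) (hv : v ∈ S) (hS : S ⊆ {x | x ∈ p.support}) :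
    steinerDist G S = G.dist u v := by
  have hmem : G.dist u v ∈
      {n | ∃ H : G.Subgraph, H.Connected ∧ S ⊆ H.verts ∧ H.edgeSet.ncard = n} := by
    refine ⟨p.toSubgraph, p.toSubgraph_connected, fun x hx => p.mem_verts_toSubgraph.2 (hS hx), ?_⟩
    classical
    rw [Walk.edgeSet_toSubgraph, ← Walk.coe_edges_toFinset, Set.ncard_coe_finset,
      List.toFinset_card_of_nodup (p.isPath_of_length_eq_dist hp).edges_nodup, Walk.length_edges,
      hp]
  refine le_antisymm (Nat.sInf_le hmem) (le_csInf ⟨_, hmem⟩ ?_)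
  rintro _ ⟨H, hH, hSH, rfl⟩
  exact hH.dist_le_ncard_edgeSet (hSH hu) (hSH hv)

end

section

variable {n : ℕ}

theorem pathGraph.sub_le_length {u v : Fin n} (p : (pathGraph n).Walk u v) :
    (v : ℕ) - u ≤ p.length := by
  induction p with
  | nil => simp
  | cons h p ih =>
    rw [pathGraph_adj] at h
    rw [Walk.length_cons]
    omega

theorem pathGraph.exists_walk_Icc_subset_support {a b : Fin n} (hab : a ≤ b) :
    ∃ p : (pathGraph n).Walk a b, p.length = b - a ∧ ∀ x, a ≤ x → x ≤ b → x ∈ p.support := by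
  induction hd : (b : ℕ) - a generalizing a with
  | zero =>
    obtain rfl : a = b := le_antisymm hab (Fin.le_iff_val_le_val.2 (by omega))
    exact ⟨.nil, rfl, fun x h1 h2 => by simp [le_antisymm h2 h1]⟩
  | succ d ih =>
    have ha : (a : ℕ) + 1 < n := by omega
    have hadj : (pathGraph n).Adj a ⟨a + 1, ha⟩ := pathGraph_adj.2 (Or.inl rfl)
    obtain ⟨p, hp, hsupp⟩ := ih (a := ⟨a + 1, ha⟩) (Fin.le_iff_val_le_val.2 (by dsimp only; omega))
      (by dsimp only; omega)
    refine ⟨.cons hadj p, by simp [hp], fun x h1 h2 => ?_⟩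
    rw [Walk.support_cons, List.mem_cons]
    rcases eq_or_lt_of_le h1 with h | h
    · exact .inl h.symm
    · exact .inr (hsupp x (Fin.le_iff_val_le_val.2 (by dsimp only; omega)) h2)

theorem pathGraph.dist_eq_sub {a b : Fin n} (hab : a ≤ b) : (pathGraph n).dist a b = b - a := by
  obtain ⟨p, hp, -⟩ := pathGraph.exists_walk_Icc_subset_support hab
  obtain ⟨q, hq⟩ := (pathGraph_preconnected n a b).exists_walk_length_eq_dist
  exact le_antisymm (hp ▸ dist_le p) (hq ▸ pathGraph.sub_le_length q)

theorem steinerDist_pathGraph_eq_sub {S : Set (Fin n)} {a b : Fin n} (ha : a ∈ S) (hb : b ∈ S)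
    (hS : S ⊆ Set.Icc a b) : steinerDist (pathGraph n) S = b - a := by
  have hab : a ≤ b := (hS ha).2
  obtain ⟨p, hp, hsupp⟩ := pathGraph.exists_walk_Icc_subset_support hab
  rw [← pathGraph.dist_eq_sub hab] at hp ⊢
  exact steinerDist_eq_dist_of_length_eq p hp ha hb fun x hx => hsupp x (hS hx).1 (hS hx).2

end

theorem sum_powersetCard_steinerDist_pathGraph {M : Type*} [AddCommMonoid M] (n m : ℕ)
    (g : ℕ → M) :
    ∑ S ∈ powersetCard (m + 2) (univ : Finset (Fin n)), g (steinerDist (pathGraph n) S) =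
      ∑ j ∈ Ico 1 n, (n - j) • (j - 1).choose m • g j := by
  rw [sum_powersetCard_add_two, univ_product_univ, ← Fin.sum_filter_lt_eq_sum_Ico]
  refine sum_congr rfl fun p hp => ?_
  have hlt : p.1 < p.2 := (mem_filter.1 hp).2
  rw [filter_lt_lt_eq_Ioo]
  calc _ = ∑ N ∈ powersetCard m (Ioo p.1 p.2), g (p.2 - p.1) := by
        refine sum_congr rfl fun N hN => ?_
        have hN : ∀ x ∈ N, p.1 < x ∧ x < p.2 := fun x hx =>
          mem_Ioo.1 ((mem_powersetCard.1 hN).1 hx)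
        rw [steinerDist_pathGraph_eq_sub (by simp) (by simp)
          (coe_insert_insert_subset_Icc hlt.le hN)]
    _ = _ := by rw [Finset.sum_const, card_powersetCard, Fin.card_Ioo]

end SimpleGraph

theorem SWW_eq_sum_choose_two {V : Type*} [Fintype V] [DecidableEq V] (k : ℕ)
    (G : SimpleGraph V) :
    SWW k G = ∑ S ∈ powersetCard k (univ : Finset V),
      ((steinerDist G (S : Set V) + 1).choose 2 : ℝ) := by
  rw [SWW, ← mul_add, ← sum_add_distrib, mul_sum]
  refine sum_congr rfl fun S _ => ?_
  rw [Nat.cast_choose_two]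
  push_cast
  ring

theorem SWW_pathGraph_eq_sum_Ico (n m : ℕ) :
    SWW (m + 2) (pathGraph n) =
      ∑ j ∈ Ico 1 n, (((n - j) * ((j + 1).choose 2 * (j - 1).choose m) : ℕ) : ℝ) := by
  rw [SWW_eq_sum_choose_two,
    sum_powersetCard_steinerDist_pathGraph n m fun d => ((d + 1).choose 2 : ℝ)]
  refine sum_congr rfl fun j _ => ?_
  push_cast [nsmul_eq_mul]
  ring

theorem steiner_hyper_wiener_path_general (n k : ℕ) (hk : 2 ≤ k) :
    SWW k (SimpleGraph.pathGraph n)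
        = ∑ j ∈ Finset.Icc (k - 1) (n - 1),
            (j : ℝ) * ((j : ℝ) + 1) * ((n : ℝ) - (j : ℝ)) / 2 * (Nat.choose (j - 1) (k - 2) : ℝ) ∧
    SWW k (SimpleGraph.pathGraph n)
        = (Nat.choose k 2 : ℝ) * (Nat.choose (n + 2) (k + 2) : ℝ) := by
  obtain ⟨m, rfl⟩ := Nat.exists_eq_add_of_le' hk
  rw [SWW_pathGraph_eq_sum_Ico]
  refine ⟨?_, ?_⟩
  · rw [Nat.add_sub_cancel, show m + 2 - 1 = m + 1 by omega]
    have hsub : Icc (m + 1) (n - 1) ⊆ Ico 1 n := fun j hj => by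
      rw [mem_Icc] at hj; rw [mem_Ico]; omega
    rw [sum_subset hsub fun j hj hj' => by
      rw [mem_Ico] at hj; rw [mem_Icc] at hj'
      simp [Nat.choose_eq_zero_of_lt (show j - 1 < m by omega)]]
    refine sum_congr rfl fun j hj => ?_
    rw [Nat.cast_mul, Nat.cast_sub (mem_Ico.1 hj).2.le, Nat.cast_mul, Nat.cast_choose_two]
    push_cast
    ring
  · rw [← Nat.cast_sum, Nat.sum_Ico_sub_mul_choose_two_mul_choose]
    push_cast
    ring

/-- `SWW_k(P_n) = ∑_{j=k-1}^{n-1} (j(j+1)(n-j)/2)·C(j-1,k-2) = C(k,2)·C(n+2,k+2)`. -/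
theorem steiner_hyper_wiener_path (n k : ℕ) (hk : 2 ≤ k) (hkn : k ≤ n) :
    SWW k (SimpleGraph.pathGraph n)
        = ∑ j ∈ Finset.Icc (k - 1) (n - 1),
            (j : ℝ) * ((j : ℝ) + 1) * ((n : ℝ) - (j : ℝ)) / 2 * (Nat.choose (j - 1) (k - 2) : ℝ) ∧
    SWW k (SimpleGraph.pathGraph n)
        = (Nat.choose k 2 : ℝ) * (Nat.choose (n + 2) (k + 2) : ℝ) :=
  steiner_hyper_wiener_path_general n k hk
end

section
/- Let G_{m,n} = P_m □ P_n be the grid graph with m, n ≥ 2. Then the Wiener index of G_{m,n} equals W(G_{m,n}) = (1/6)(m³n² + m²n³ − m²n − mn²). -/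
open Finset SimpleGraph Polynomial

/-! Distances in a box product add up coordinatewise, and in the path `P_n` the distance between
`i` and `j` is `|i - j|`, since a walk changes the index by at most one per step. Summing over
ordered pairs, `∑ d = n² · D(P_m) + m² · D(P_n)`, where
`D(P_n) = ∑_{i,j<n} |i - j| = (n³ - n)/3`. -/

namespace Nat

theorem two_mul_sum_range_dist (n : ℕ) : 2 * ∑ i ∈ range n, i.dist n = n * (n + 1) := by
  have h : ∑ i ∈ range n, i.dist n = ∑ i ∈ range (n + 1), i := by
    rw [sum_range_succ', ← sum_range_reflect, add_zero]
    refine sum_congr rfl fun j hj => ?_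
    rw [mem_range] at hj
    unfold Nat.dist
    omega
  rw [h, mul_comm, sum_range_id_mul_two, Nat.add_sub_cancel, mul_comm]

-- Stated additively, as `n ^ 3 - n` would be truncated subtraction.
theorem three_mul_sum_range_sum_range_dist_add (n : ℕ) :
    3 * ∑ i ∈ range n, ∑ j ∈ range n, i.dist j + n = n ^ 3 := by
  induction n with
  | zero => simp
  | succ n ih =>
    have := two_mul_sum_range_dist n
    simp only [sum_range_succ, sum_add_distrib, Nat.dist_self, Nat.dist_comm n]
    nlinarith

end Nat

namespace SimpleGraph

section Path

variable {V : Type*} {G : SimpleGraph V}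

theorem Walk.natDist_le_length (f : V → ℕ) (hf : ∀ ⦃u v⦄, G.Adj u v → (f u).dist (f v) ≤ 1)
    {u v : V} (p : G.Walk u v) : (f u).dist (f v) ≤ p.length := by
  induction p with
  | nil => simp
  | @cons u w v hadj q ih =>
    calc (f u).dist (f v) ≤ (f u).dist (f w) + (f w).dist (f v) := Nat.dist.triangle_inequality ..
      _ ≤ q.length + 1 := by linarith [hf hadj]

theorem Reachable.natDist_le_dist (f : V → ℕ) (hf : ∀ ⦃u v⦄, G.Adj u v → (f u).dist (f v) ≤ 1)
    {u v : V} (h : G.Reachable u v) : (f u).dist (f v) ≤ G.dist u v := by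
  obtain ⟨p, hp⟩ := h.exists_walk_length_eq_dist
  exact hp ▸ p.natDist_le_length f hf

theorem pathGraph_dist_le_of_val_eq_add {n : ℕ} (k : ℕ) {i j : Fin n} (h : j.val = i.val + k) :
    (pathGraph n).dist i j ≤ k := by
  induction k generalizing j with
  | zero => simp [Fin.ext (h.trans (add_zero _))]
  | succ k ih =>
    let j' : Fin n := ⟨i.val + k, by omega⟩
    have hadj : (pathGraph n).Adj j' j := pathGraph_adj.mpr (.inl (by simp [j', h]; omega))
    calc (pathGraph n).dist i j ≤ (pathGraph n).dist i j' + (pathGraph n).dist j' j :=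
          hadj.reachable.dist_triangle_right i
      _ ≤ k + 1 := by rw [dist_eq_one_iff_adj.mpr hadj]; exact Nat.add_le_add_right (ih rfl) 1

theorem pathGraph_dist {n : ℕ} (i j : Fin n) : (pathGraph n).dist i j = i.val.dist j.val := by
  refine le_antisymm ?_ ((pathGraph_preconnected n i j).natDist_le_dist Fin.val ?_)
  · rcases le_total i j with hij | hij
    · exact pathGraph_dist_le_of_val_eq_add _ (by rw [Nat.dist_eq_sub_of_le hij]; omega)
    · rw [dist_comm, Nat.dist_comm]
      exact pathGraph_dist_le_of_val_eq_add _ (by rw [Nat.dist_eq_sub_of_le hij]; omega)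
  · intro u v huv
    rw [pathGraph_adj] at huv
    unfold Nat.dist
    omega

theorem three_mul_sum_sum_pathGraph_dist_add (n : ℕ) :
    3 * ∑ i, ∑ j, (pathGraph n).dist i j + n = n ^ 3 := by
  have h (i : ℕ) : ∑ j : Fin n, i.dist j = ∑ j ∈ range n, i.dist j :=
    Fin.sum_univ_eq_sum_range _ n
  simp only [pathGraph_dist, h]
  rw [Fin.sum_univ_eq_sum_range (fun i => ∑ j ∈ range n, i.dist j),
    Nat.three_mul_sum_range_sum_range_dist_add]

end Path

section BoxProd

variable {α β : Type*} {G : SimpleGraph α} {H : SimpleGraph β}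

theorem Reachable.dist_boxProd {x y : α × β} (h₁ : G.Reachable x.1 y.1)
    (h₂ : H.Reachable x.2 y.2) : (G □ H).dist x y = G.dist x.1 y.1 + H.dist x.2 y.2 := by
  rw [dist, edist_boxProd, ENat.toNat_add (edist_ne_top_iff_reachable.mpr h₁)
    (edist_ne_top_iff_reachable.mpr h₂), dist, dist]

theorem Preconnected.sum_sum_dist_boxProd [Fintype α] [Fintype β] (hG : G.Preconnected)
    (hH : H.Preconnected) :
    ∑ x : α × β, ∑ y : α × β, (G □ H).dist x y =
      Fintype.card β ^ 2 * ∑ a, ∑ a', G.dist a a' + Fintype.card α ^ 2 * ∑ b, ∑ b', H.dist b b' := by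
  simp only [fun x y : α × β => Reachable.dist_boxProd (hG x.1 y.1) (hH x.2 y.2),
    Fintype.sum_prod_type, sum_add_distrib, sum_const, card_univ, smul_eq_mul, mul_sum,
    ← mul_assoc, ← sq]

end BoxProd

theorem sum_offDiag_dist {V : Type*} [Fintype V] [DecidableEq V] (G : SimpleGraph V) :
    ∑ p ∈ univ.offDiag, G.dist p.1 p.2 = ∑ u, ∑ v, G.dist u v := by
  rw [← sum_product', univ_product_univ]
  refine sum_subset (subset_univ _) fun ⟨u, v⟩ _ h => ?_
  obtain rfl : u = v := by simpa using h
  exact dist_self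

end SimpleGraph

theorem wiener_grid_general (m n : ℕ) :
    wiener (SimpleGraph.pathGraph m □ SimpleGraph.pathGraph n)
      = 1 / 6 * ((m : ℝ) ^ 3 * (n : ℝ) ^ 2 + (m : ℝ) ^ 2 * (n : ℝ) ^ 3
          - (m : ℝ) ^ 2 * (n : ℝ) - (m : ℝ) * (n : ℝ) ^ 2) := by
  have hm : (3 * ∑ i, ∑ j, (pathGraph m).dist i j + m : ℝ) = m ^ 3 := by
    exact_mod_cast three_mul_sum_sum_pathGraph_dist_add m
  have hn : (3 * ∑ i, ∑ j, (pathGraph n).dist i j + n : ℝ) = n ^ 3 := by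
    exact_mod_cast three_mul_sum_sum_pathGraph_dist_add n
  rw [wiener, ← Nat.cast_sum, sum_offDiag_dist,
    (pathGraph_preconnected m).sum_sum_dist_boxProd (pathGraph_preconnected n)]
  simp only [Fintype.card_fin]
  push_cast at hm hn ⊢
  linear_combination ((n : ℝ) ^ 2 * hm + (m : ℝ) ^ 2 * hn) / 6

/-- Wiener index of the grid graph `G_{m,n} = P_m □ P_n`, `m, n ≥ 2`:
`W(G_{m,n}) = (1/6)(m³n² + m²n³ − m²n − mn²)`. -/
theorem wiener_grid (m n : ℕ) (hm : 2 ≤ m) (hn : 2 ≤ n) :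
    wiener (SimpleGraph.pathGraph m □ SimpleGraph.pathGraph n)
      = 1 / 6 * ((m : ℝ) ^ 3 * (n : ℝ) ^ 2 + (m : ℝ) ^ 2 * (n : ℝ) ^ 3
          - (m : ℝ) ^ 2 * (n : ℝ) - (m : ℝ) * (n : ℝ) ^ 2) :=
  wiener_grid_general m n
end

section
/- Let G_{m,n} = P_m □ P_n be the grid graph with m, n ≥ 2. Then the Steiner 3-Wiener index of G_{m,n} equals SW_3(G_{m,n}) = (1/12)(m⁴n³ + m³n⁴ − 3m³n² − 3m²n³ + 2m²n + 2mn²). -/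
open Finset SimpleGraph Polynomial

/-!
For three vertices of the grid, a connected subgraph containing them must cross every cut
between two consecutive columns lying between their extreme columns, with a horizontal edge,
and likewise every cut between consecutive rows with a vertical edge. The three monotone paths
from their coordinatewise median realise exactly one edge per such cut, so `d(S)` is the number
of row and column cuts separating `S`. Summing over `S` and exchanging the sums, each column cut
contributes the number of triples not on one side of it, `C(mn,3) - C(kn,3) - C((m-k)n,3)`,
and the resulting sums of cubic polynomials give the formula.
-/

section Steiner

variable {V : Type*} {G : SimpleGraph V}

theorem steinerDist_eq_of_forall_le {S : Set V} {N : ℕ}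
    (h₀ : ∃ H : G.Subgraph, H.Connected ∧ S ⊆ H.verts ∧ H.edgeSet.ncard ≤ N)
    (h : ∀ H : G.Subgraph, H.Connected → S ⊆ H.verts → N ≤ H.edgeSet.ncard) :
    steinerDist G S = N := by
  obtain ⟨H₀, hH₀, hS₀, hN⟩ := h₀
  have hmem : H₀.edgeSet.ncard ∈
      {n | ∃ H : G.Subgraph, H.Connected ∧ S ⊆ H.verts ∧ H.edgeSet.ncard = n} :=
    ⟨H₀, hH₀, hS₀, rfl⟩
  refine le_antisymm ((Nat.sInf_le hmem).trans hN) (le_csInf ⟨_, hmem⟩ ?_)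
  rintro _ ⟨H, hH, hS, rfl⟩
  exact h H hH hS

theorem SimpleGraph.Walk.ncard_edgeSet_toSubgraph_le {u v : V} (p : G.Walk u v) :
    p.toSubgraph.edgeSet.ncard ≤ p.length := by
  classical
  calc p.toSubgraph.edgeSet.ncard = #p.edges.toFinset := by
        rw [← Set.ncard_coe_finset]; congr 1; ext; simp
    _ ≤ p.edges.length := List.toFinset_card_le _
    _ = p.length := p.length_edges

theorem exists_connected_subgraph_ncard_le_of_walks {z u v w : V}
    (pu : G.Walk z u) (pv : G.Walk z v) (pw : G.Walk z w) :
    ∃ H : G.Subgraph, H.Connected ∧ {u, v, w} ⊆ H.verts ∧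
      H.edgeSet.ncard ≤ pu.length + pv.length + pw.length := by
  refine ⟨pu.toSubgraph ⊔ pv.toSubgraph ⊔ pw.toSubgraph, ?_, ?_, ?_⟩
  · refine Subgraph.connected_sup (Subgraph.connected_sup pu.toSubgraph_connected.preconnected
      pv.toSubgraph_connected.preconnected ⟨z, ?_, ?_⟩).preconnected
      pw.toSubgraph_connected.preconnected ⟨z, Or.inl ?_, ?_⟩ <;> simp
  · rintro x (rfl | rfl | rfl) <;> simp
  · rw [Subgraph.edgeSet_sup, Subgraph.edgeSet_sup]
    refine (Set.ncard_union_le _ _).trans (add_le_add ((Set.ncard_union_le _ _).trans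
      (add_le_add ?_ ?_)) ?_) <;> exact Walk.ncard_edgeSet_toSubgraph_le _

end Steiner

theorem SimpleGraph.boxProd_exists_walk_length_eq {α β : Type*} {G : SimpleGraph α}
    {H : SimpleGraph β} {x y : α × β} (p : G.Walk x.1 y.1) (q : H.Walk x.2 y.2) :
    ∃ r : (G □ H).Walk x y, r.length = p.length + q.length :=
  ⟨(p.boxProdLeft H x.2).append (q.boxProdRight G y.1),
    by rw [Walk.length_append]; exact congrArg₂ (· + ·) (p.length_map _) (q.length_map _)⟩

section Cuts

variable {V : Type*} {G : SimpleGraph V}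

def CrossesCut (g : V → ℕ) (S : Finset V) (k : ℕ) : Prop :=
  (∃ a ∈ S, g a ≤ k) ∧ ∃ a ∈ S, k < g a

instance (g : V → ℕ) (S : Finset V) (k : ℕ) : Decidable (CrossesCut g S k) :=
  inferInstanceAs (Decidable (_ ∧ _))

theorem card_crossesCut_triple [DecidableEq V] (g : V → ℕ) {u v w : V} {M : ℕ}
    (hu : g u ≤ M) (hv : g v ≤ M) (hw : g w ≤ M) :
    #{k ∈ range M | CrossesCut g {u, v, w} k}
      = max (max (g u) (g v)) (g w) - min (min (g u) (g v)) (g w) := by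
  rw [← Nat.card_Ico]
  congr 1
  ext k
  simp only [CrossesCut, mem_filter, mem_range, mem_Ico, mem_insert, mem_singleton,
    exists_eq_or_imp, exists_eq_left]
  omega

theorem SimpleGraph.Walk.exists_adj_of_le_of_lt {f : V → ℕ}
    (hf : ∀ a b, G.Adj a b → f b ≤ f a + 1) {u v : V} (p : G.Walk u v) {k : ℕ}
    (hu : f u ≤ k) (hv : k < f v) : ∃ a b, G.Adj a b ∧ f a = k ∧ f b = k + 1 := by
  induction p with
  | nil => omega
  | @cons x y z hxy p ih =>
    by_cases hy : f y ≤ k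
    · exact ih hy hv
    · exact ⟨x, y, hxy, by have := hf x y hxy; omega, by have := hf x y hxy; omega⟩

theorem SimpleGraph.Subgraph.Connected.exists_map_eq_of_le_of_lt {f : V → ℕ}
    (hf : ∀ a b, G.Adj a b → f b ≤ f a + 1) {H : G.Subgraph} (hH : H.Connected)
    {u v : V} (hu : u ∈ H.verts) (hv : v ∈ H.verts) {k : ℕ} (huk : f u ≤ k) (hvk : k < f v) :
    ∃ e ∈ H.edgeSet, e.map f = s(k, k + 1) := by
  obtain ⟨p⟩ := hH.preconnected ⟨u, hu⟩ ⟨v, hv⟩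
  obtain ⟨a, b, hab, ha, hb⟩ := p.exists_adj_of_le_of_lt (f := f ∘ Subtype.val)
    (fun a b h => hf a.1 b.1 (H.adj_sub h)) huk hvk
  exact ⟨s(a, b), hab, by simp_all⟩

theorem SimpleGraph.Subgraph.Connected.card_crossesCut_le [Finite V] {f : V → ℕ}
    (hf : ∀ a b, G.Adj a b → f b ≤ f a + 1) {H : G.Subgraph} (hH : H.Connected)
    {S : Finset V} (hS : ↑S ⊆ H.verts) (M : ℕ) :
    #{k ∈ range M | CrossesCut f S k} ≤ {e ∈ H.edgeSet | ¬(e.map f).IsDiag}.ncard := by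
  let cut : ℕ → Sym2 ℕ := fun k => s(k, k + 1)
  have hcut : Function.Injective cut := fun k k' h => by simp [cut] at h; omega
  have hsub : cut '' ↑({k ∈ range M | CrossesCut f S k} : Finset ℕ) ⊆
      Sym2.map f '' {e ∈ H.edgeSet | ¬(e.map f).IsDiag} := by
    rintro _ ⟨k, hk, rfl⟩
    obtain ⟨-, ⟨a, ha, hak⟩, b, hb, hbk⟩ := Finset.mem_filter.mp hk
    obtain ⟨e, he, hek⟩ := hH.exists_map_eq_of_le_of_lt hf (hS ha) (hS hb) hak hbk
    exact ⟨e, ⟨he, by simp [hek]⟩, hek⟩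
  calc #{k ∈ range M | CrossesCut f S k}
      = (cut '' ↑({k ∈ range M | CrossesCut f S k} : Finset ℕ)).ncard := by
        rw [Set.ncard_image_of_injective _ hcut, Set.ncard_coe_finset]
    _ ≤ _ :=
        (Set.ncard_le_ncard hsub (Set.toFinite _)).trans (Set.ncard_image_le (Set.toFinite _))

end Cuts

section Counting

variable {α : Type*}

theorem card_filter_powersetCard_forall (s : Finset α) (p : α → Prop) [DecidablePred p]
    (r : ℕ) : #{S ∈ powersetCard r s | ∀ a ∈ S, p a} = (#{a ∈ s | p a}).choose r := by
  rw [← card_powersetCard]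
  congr 1
  ext S
  simp only [mem_filter, mem_powersetCard, subset_iff]
  grind

theorem card_filter_powersetCard_mixed (s : Finset α) (p : α → Prop) [DecidablePred p]
    {r : ℕ} (hr : r ≠ 0) :
    #{S ∈ powersetCard r s | (∃ a ∈ S, p a) ∧ ∃ a ∈ S, ¬p a}
      + (#{a ∈ s | p a}).choose r + (#{a ∈ s | ¬p a}).choose r = (#s).choose r := by
  classical
  have hdisj : Disjoint {S ∈ powersetCard r s | ∀ a ∈ S, p a}
      {S ∈ powersetCard r s | ∀ a ∈ S, ¬p a} := by
    refine disjoint_filter.mpr fun S hS hp hnp => ?_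
    obtain ⟨a, ha⟩ := card_pos.mp ((mem_powersetCard.mp hS).2 ▸ Nat.pos_of_ne_zero hr)
    exact hnp a ha (hp a ha)
  have hsplit : {S ∈ powersetCard r s | ¬((∃ a ∈ S, p a) ∧ ∃ a ∈ S, ¬p a)} =
      {S ∈ powersetCard r s | ∀ a ∈ S, ¬p a} ∪ {S ∈ powersetCard r s | ∀ a ∈ S, p a} := by
    rw [← filter_or]
    refine filter_congr fun S _ => ?_
    grind
  rw [← card_filter_powersetCard_forall, ← card_filter_powersetCard_forall, add_assoc,
    ← card_union_of_disjoint hdisj, union_comm, ← hsplit, card_filter_add_card_filter_not,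
    card_powersetCard]

theorem sum_card_crossesCut_add_sum_choose (s : Finset α) (g : α → ℕ)
    {r : ℕ} (hr : r ≠ 0) (M : ℕ) :
    ∑ S ∈ powersetCard r s, #{k ∈ range M | CrossesCut g S k}
      + ∑ k ∈ range M, ((#{a ∈ s | g a ≤ k}).choose r + (#{a ∈ s | k < g a}).choose r)
      = M * (#s).choose r := by
  rw [show ∑ S ∈ powersetCard r s, #{k ∈ range M | CrossesCut g S k}
      = ∑ k ∈ range M, #{S ∈ powersetCard r s | CrossesCut g S k} from
    sum_card_bipartiteAbove_eq_sum_card_bipartiteBelow _, ← sum_add_distrib]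
  calc _ = ∑ _k ∈ range M, (#s).choose r := sum_congr rfl fun k _ => by
        simpa only [CrossesCut, ← not_le, ← add_assoc] using card_filter_powersetCard_mixed s _ hr
    _ = M * (#s).choose r := by rw [sum_const, card_range, smul_eq_mul]

end Counting

section Grid

variable {m n : ℕ}

theorem pathGraph_exists_walk_length_eq_dist (a b : Fin n) :
    ∃ p : (pathGraph n).Walk a b, p.length = Nat.dist a b := by
  wlog hab : a ≤ b generalizing a b
  · obtain ⟨p, hp⟩ := this b a (le_of_not_ge hab)
    exact ⟨p.reverse, by rw [Walk.length_reverse, hp, Nat.dist_comm]⟩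
  obtain ⟨d, hd⟩ : ∃ d, (b : ℕ) = a + d := ⟨b - a, by omega⟩
  induction d generalizing b with
  | zero =>
    obtain rfl : a = b := Fin.ext (by omega)
    exact ⟨.nil, by simp⟩
  | succ d ih =>
    let c : Fin n := ⟨a + d, by omega⟩
    obtain ⟨p, hp⟩ := ih c (Fin.le_def.mpr (by simp [c])) rfl
    have hcb : (pathGraph n).Adj c b := pathGraph_adj.mpr (Or.inl (by simp [c]; omega))
    exact ⟨p.concat hcb, by simp only [Walk.length_concat, hp, Nat.dist, c]; omega⟩

theorem Fin.exists_dist_add_dist_add_dist (a b c : Fin n) :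
    ∃ z : Fin n, Nat.dist z a + Nat.dist z b + Nat.dist z c
      = max (max (a : ℕ) b) c - min (min (a : ℕ) b) c :=
  ⟨max (min a b) (min (max a b) c), by simp only [Nat.dist, Fin.coe_max, Fin.coe_min]; omega⟩

theorem grid_adj_fst_le {x y : Fin m × Fin n} (h : (pathGraph m □ pathGraph n).Adj x y) :
    (y.1 : ℕ) ≤ x.1 + 1 := by
  rcases boxProd_adj.mp h with ⟨h, -⟩ | ⟨-, h⟩
  · rw [pathGraph_adj] at h; omega
  · rw [h]; omega

theorem grid_adj_snd_le {x y : Fin m × Fin n} (h : (pathGraph m □ pathGraph n).Adj x y) :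
    (y.2 : ℕ) ≤ x.2 + 1 := by
  rcases boxProd_adj.mp h with ⟨-, h⟩ | ⟨h, -⟩
  · rw [h]; omega
  · rw [pathGraph_adj] at h; omega

theorem grid_isDiag_map_fst_or_snd {e : Sym2 (Fin m × Fin n)}
    (he : e ∈ (pathGraph m □ pathGraph n).edgeSet) :
    (e.map fun p => (p.1 : ℕ)).IsDiag ∨ (e.map fun p => (p.2 : ℕ)).IsDiag := by
  induction e using Sym2.ind with
  | _ x y =>
    rcases boxProd_adj.mp he with ⟨-, h⟩ | ⟨-, h⟩ <;> simp only at h <;> simp [h]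

theorem grid_card_crossesCut_le_ncard {H : (pathGraph m □ pathGraph n).Subgraph}
    (hH : H.Connected) {S : Finset (Fin m × Fin n)} (hS : ↑S ⊆ H.verts) :
    #{k ∈ range m | CrossesCut (fun p => (p.1 : ℕ)) S k}
      + #{l ∈ range n | CrossesCut (fun p => (p.2 : ℕ)) S l} ≤ H.edgeSet.ncard := by
  have hdisj : Disjoint {e ∈ H.edgeSet | ¬(e.map fun p => (p.1 : ℕ)).IsDiag}
      {e ∈ H.edgeSet | ¬(e.map fun p => (p.2 : ℕ)).IsDiag} := by
    refine Set.disjoint_left.mpr fun e ⟨he, h1⟩ ⟨_, h2⟩ => ?_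
    exact (grid_isDiag_map_fst_or_snd (H.edgeSet_subset he)).elim h1 h2
  calc _ ≤ {e ∈ H.edgeSet | ¬(e.map fun p => (p.1 : ℕ)).IsDiag}.ncard
        + {e ∈ H.edgeSet | ¬(e.map fun p => (p.2 : ℕ)).IsDiag}.ncard :=
        add_le_add (hH.card_crossesCut_le (fun _ _ => grid_adj_fst_le) hS m)
          (hH.card_crossesCut_le (fun _ _ => grid_adj_snd_le) hS n)
    _ = _ := (Set.ncard_union_eq hdisj (Set.toFinite _) (Set.toFinite _)).symm
    _ ≤ H.edgeSet.ncard :=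
        Set.ncard_le_ncard (Set.union_subset (Set.sep_subset _ _) (Set.sep_subset _ _))

theorem steinerDist_grid_of_card_eq_three {S : Finset (Fin m × Fin n)} (hS : #S = 3) :
    steinerDist (pathGraph m □ pathGraph n) S
      = #{k ∈ range m | CrossesCut (fun p => (p.1 : ℕ)) S k}
        + #{l ∈ range n | CrossesCut (fun p => (p.2 : ℕ)) S l} := by
  refine steinerDist_eq_of_forall_le ?_ fun H hH hSH => grid_card_crossesCut_le_ncard hH hSH
  obtain ⟨u, v, w, -, -, -, rfl⟩ := card_eq_three.mp hS
  obtain ⟨z₁, hz₁⟩ := Fin.exists_dist_add_dist_add_dist u.1 v.1 w.1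
  obtain ⟨z₂, hz₂⟩ := Fin.exists_dist_add_dist_add_dist u.2 v.2 w.2
  have hwalk (x : Fin m × Fin n) : ∃ p : (pathGraph m □ pathGraph n).Walk (z₁, z₂) x,
      p.length = Nat.dist z₁ x.1 + Nat.dist z₂ x.2 := by
    obtain ⟨p, hp⟩ := pathGraph_exists_walk_length_eq_dist z₁ x.1
    obtain ⟨q, hq⟩ := pathGraph_exists_walk_length_eq_dist z₂ x.2
    obtain ⟨r, hr⟩ := boxProd_exists_walk_length_eq (x := (z₁, z₂)) p q
    exact ⟨r, hr.trans (by rw [hp, hq])⟩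
  obtain ⟨pu, hpu⟩ := hwalk u
  obtain ⟨pv, hpv⟩ := hwalk v
  obtain ⟨pw, hpw⟩ := hwalk w
  obtain ⟨H, hH, hSH, hcard⟩ := exists_connected_subgraph_ncard_le_of_walks pu pv pw
  refine ⟨H, hH, by simpa using hSH, hcard.trans_eq ?_⟩
  rw [card_crossesCut_triple (fun p : Fin m × Fin n => (p.1 : ℕ)) u.1.isLt.le v.1.isLt.le
      w.1.isLt.le,
    card_crossesCut_triple (fun p : Fin m × Fin n => (p.2 : ℕ)) u.2.isLt.le v.2.isLt.le
      w.2.isLt.le,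
    hpu, hpv, hpw]
  omega

theorem Fin.card_filter_val_le (k : ℕ) : #{i : Fin m | (i : ℕ) ≤ k} = min m (k + 1) := by
  simp only [← Nat.lt_succ_iff, Fin.card_filter_val_lt]

theorem Fin.card_filter_lt_val (k : ℕ) : #{i : Fin m | k < (i : ℕ)} = m - min m (k + 1) := by
  have h := card_filter_add_card_filter_not (s := univ) (p := fun i : Fin m => (i : ℕ) ≤ k)
  simp only [not_le, Fin.card_filter_val_le, card_univ, Fintype.card_fin] at h
  omega

theorem grid_card_filter_fst_le (k : ℕ) :
    #{p : Fin m × Fin n | (p.1 : ℕ) ≤ k} = min m (k + 1) * n := by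
  rw [← univ_product_univ, filter_product_left fun i : Fin m => (i : ℕ) ≤ k, card_product,
    Fin.card_filter_val_le, card_fin]

theorem grid_card_filter_lt_fst (k : ℕ) :
    #{p : Fin m × Fin n | k < (p.1 : ℕ)} = (m - min m (k + 1)) * n := by
  rw [← univ_product_univ, filter_product_left fun i : Fin m => k < (i : ℕ), card_product,
    Fin.card_filter_lt_val, card_fin]

theorem grid_card_filter_snd_le (k : ℕ) :
    #{p : Fin m × Fin n | (p.2 : ℕ) ≤ k} = min n (k + 1) * m := by
  rw [← univ_product_univ, filter_product_right fun i : Fin n => (i : ℕ) ≤ k, card_product,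
    Fin.card_filter_val_le, card_fin, mul_comm]

theorem grid_card_filter_lt_snd (k : ℕ) :
    #{p : Fin m × Fin n | k < (p.2 : ℕ)} = (n - min n (k + 1)) * m := by
  rw [← univ_product_univ, filter_product_right fun i : Fin n => k < (i : ℕ), card_product,
    Fin.card_filter_lt_val, card_fin, mul_comm]

end Grid

theorem grid_sum_card_crossesCut_fst (m n : ℕ) :
    ∑ S ∈ powersetCard 3 (univ : Finset (Fin m × Fin n)),
        #{k ∈ range m | CrossesCut (fun p => (p.1 : ℕ)) S k}
      + ∑ k ∈ range m, (((k + 1) * n).choose 3 + ((m - 1 - k) * n).choose 3)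
      = m * (m * n).choose 3 := by
  have h := sum_card_crossesCut_add_sum_choose (univ : Finset (Fin m × Fin n))
    (fun p => (p.1 : ℕ)) three_ne_zero m
  rw [card_univ, Fintype.card_prod, Fintype.card_fin, Fintype.card_fin] at h
  rw [← h]
  congr 1
  refine sum_congr rfl fun k hk => ?_
  rw [grid_card_filter_fst_le, grid_card_filter_lt_fst, min_eq_right (mem_range.mp hk),
    Nat.sub_sub, add_comm 1 k]

theorem grid_sum_card_crossesCut_snd (m n : ℕ) :
    ∑ S ∈ powersetCard 3 (univ : Finset (Fin m × Fin n)),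
        #{l ∈ range n | CrossesCut (fun p => (p.2 : ℕ)) S l}
      + ∑ l ∈ range n, (((l + 1) * m).choose 3 + ((n - 1 - l) * m).choose 3)
      = n * (m * n).choose 3 := by
  have h := sum_card_crossesCut_add_sum_choose (univ : Finset (Fin m × Fin n))
    (fun p => (p.2 : ℕ)) three_ne_zero n
  rw [card_univ, Fintype.card_prod, Fintype.card_fin, Fintype.card_fin] at h
  rw [← h]
  congr 1
  refine sum_congr rfl fun l hl => ?_
  rw [grid_card_filter_snd_le, grid_card_filter_lt_snd, min_eq_right (mem_range.mp hl),
    Nat.sub_sub, add_comm 1 l]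

theorem SW_three_grid (m n : ℕ) :
    SW 3 (pathGraph m □ pathGraph n)
      = ∑ S ∈ powersetCard 3 (univ : Finset (Fin m × Fin n)),
          #{k ∈ range m | CrossesCut (fun p => (p.1 : ℕ)) S k}
        + ∑ S ∈ powersetCard 3 (univ : Finset (Fin m × Fin n)),
          #{l ∈ range n | CrossesCut (fun p => (p.2 : ℕ)) S l} := by
  rw [SW, ← sum_add_distrib]
  exact sum_congr rfl fun S hS => steinerDist_grid_of_card_eq_three (mem_powersetCard.mp hS).2


theorem Nat.cast_choose_three {K : Type*} [Field K] [CharZero K] (a : ℕ) :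
    (a.choose 3 : K) = a * (a - 1) * (a - 2) / 6 := by
  have h : ((a.descFactorial 3 : ℕ) : K) = 6 * a.choose 3 := by
    rw [Nat.descFactorial_eq_factorial_mul_choose]; push_cast; norm_num [Nat.factorial]
  rcases a with _ | _ | a
  · simp
  · simp [Nat.choose]
  · simp only [Nat.descFactorial, Nat.cast_mul] at h
    push_cast at h ⊢
    linear_combination -h / 6

theorem sum_range_cast_choose_three_mul (m n : ℕ) :
    ∑ j ∈ range m, (((j * n).choose 3 : ℕ) : ℝ)
      = m * (m - 1) * n * (n ^ 2 * m * (m - 1) - 2 * n * (2 * m - 1) + 4) / 24 := by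
  induction m with
  | zero => simp
  | succ m ih =>
    rw [sum_range_succ, ih, Nat.cast_choose_three]
    push_cast
    ring

theorem cast_sum_range_choose_three_add_reflect (m n : ℕ) :
    ((∑ k ∈ range m, (((k + 1) * n).choose 3 + ((m - 1 - k) * n).choose 3) : ℕ) : ℝ)
      = m * (m - 1) * n * (n ^ 2 * m * (m - 1) - 2 * n * (2 * m - 1) + 4) / 12
        + m * n * (m * n - 1) * (m * n - 2) / 6 := by
  have hshift := sum_range_succ' (fun j => (((j * n).choose 3 : ℕ) : ℝ)) m
  have hreflect := sum_range_reflect (fun j => (((j * n).choose 3 : ℕ) : ℝ)) m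
  simp only [zero_mul, Nat.choose_zero_succ, Nat.cast_zero, add_zero] at hshift
  push_cast
  rw [sum_add_distrib, ← hshift, hreflect, sum_range_succ, sum_range_cast_choose_three_mul,
    Nat.cast_choose_three]
  push_cast
  ring

theorem steiner_three_wiener_grid_general (m n : ℕ) :
    (SW 3 (SimpleGraph.pathGraph m □ SimpleGraph.pathGraph n) : ℝ)
      = 1 / 12 * ((m : ℝ) ^ 4 * (n : ℝ) ^ 3 + (m : ℝ) ^ 3 * (n : ℝ) ^ 4
          - 3 * (m : ℝ) ^ 3 * (n : ℝ) ^ 2 - 3 * (m : ℝ) ^ 2 * (n : ℝ) ^ 3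
          + 2 * (m : ℝ) ^ 2 * (n : ℝ) + 2 * (m : ℝ) * (n : ℝ) ^ 2) := by
  have hx := congrArg (Nat.cast : ℕ → ℝ) (grid_sum_card_crossesCut_fst m n)
  have hy := congrArg (Nat.cast : ℕ → ℝ) (grid_sum_card_crossesCut_snd m n)
  simp only [Nat.cast_add, Nat.cast_mul, cast_sum_range_choose_three_add_reflect,
    Nat.cast_choose_three] at hx hy
  rw [SW_three_grid, Nat.cast_add]
  linear_combination hx + hy

/-- Steiner 3-Wiener index of the grid graph `G_{m,n} = P_m □ P_n`, `m, n ≥ 2`: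
`SW₃(G_{m,n}) = (1/12)(m⁴n³ + m³n⁴ − 3m³n² − 3m²n³ + 2m²n + 2mn²)`. -/
theorem steiner_three_wiener_grid (m n : ℕ) (hm : 2 ≤ m) (hn : 2 ≤ n) :
    (SW 3 (SimpleGraph.pathGraph m □ SimpleGraph.pathGraph n) : ℝ)
      = 1 / 12 * ((m : ℝ) ^ 4 * (n : ℝ) ^ 3 + (m : ℝ) ^ 3 * (n : ℝ) ^ 4
          - 3 * (m : ℝ) ^ 3 * (n : ℝ) ^ 2 - 3 * (m : ℝ) ^ 2 * (n : ℝ) ^ 3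
          + 2 * (m : ℝ) ^ 2 * (n : ℝ) + 2 * (m : ℝ) * (n : ℝ) ^ 2) :=
  steiner_three_wiener_grid_general m n
end

section
/- Let G_{2,n} = P_2 □ P_n be the grid graph with n ≥ 3. Then the Steiner 3-hyper-Wiener index of G_{2,n} equals SWW_3(G_{2,n}) = (1/15)(3n⁵ + 10n⁴ − 25n² + 12n). -/
/-!
In the ladder `P₂ □ Pₙ`, three vertices with columns `x, y, z` have Steiner distance
`max x y z - min x y z`, plus one unless they all lie in the same row. A tree through a vertex in
the median column and the majority row attains this; conversely a connected subgraph containing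
the three vertices crosses each of the column gaps between the extreme columns by a distinct
horizontal edge, and needs a rung when the rows differ.

Summing over ordered triples, with inclusion–exclusion for repeated vertices, turns `12 · SWW₃`
into the first two power sums of `max - min` over `[0, N)³` and over `[0, N)²`. These are
computed by induction on `N`, splitting off the slices in which some coordinate is `0`: the span
is invariant under shifting all coordinates by one.
-/

open Finset SimpleGraph Polynomial

namespace SimpleGraph

variable {V : Type*} {G : SimpleGraph V}

theorem Walk.ncard_edgeSet_le_length {u v : V} (p : G.Walk u v) : p.edgeSet.ncard ≤ p.length := by
  classical
  rw [← p.coe_edges_toFinset, Set.ncard_coe_finset, ← p.length_edges]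
  exact p.edges.toFinset_card_le

theorem Walk.exists_mem_edges_le_lt (f : V → ℕ) (k : ℕ) {u v : V} (p : G.Walk u v)
    (hu : f u ≤ k) (hv : k < f v) : ∃ x y, s(x, y) ∈ p.edges ∧ f x ≤ k ∧ k < f y := by
  induction p with
  | nil => omega
  | @cons u w v h p ih =>
    by_cases hw : f w ≤ k
    · obtain ⟨x, y, hxy, hx, hy⟩ := ih hw hv
      exact ⟨x, y, List.mem_cons_of_mem _ hxy, hx, hy⟩
    · exact ⟨u, w, List.mem_cons_self, hu, not_le.mp hw⟩

theorem Walk.exists_mem_edges_ne {α : Type*} (f : V → α) {u v : V} (p : G.Walk u v)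
    (huv : f u ≠ f v) : ∃ x y, s(x, y) ∈ p.edges ∧ f x ≠ f y := by
  induction p with
  | nil => exact absurd rfl huv
  | @cons u w v h p ih =>
    by_cases hw : f w = f v
    · exact ⟨u, w, List.mem_cons_self, hw ▸ huv⟩
    · obtain ⟨x, y, hxy, hne⟩ := ih hw
      exact ⟨x, y, List.mem_cons_of_mem _ hxy, hne⟩

theorem Subgraph.Preconnected.exists_walk_edges_subset {H : G.Subgraph} (hH : H.Preconnected)
    {u v : V} (hu : u ∈ H.verts) (hv : v ∈ H.verts) :
    ∃ p : G.Walk u v, ∀ e ∈ p.edges, e ∈ H.edgeSet := by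
  obtain ⟨p, hp⟩ := (Subgraph.preconnected_iff_forall_exists_walk_subgraph H).mp hH hu hv
  exact ⟨p, fun e he => Subgraph.edgeSet_mono hp (p.mem_edges_toSubgraph.mpr he)⟩

theorem steinerDist_le_ncard {S : Set V} {H : G.Subgraph} (hH : H.Connected) (hS : S ⊆ H.verts) :
    steinerDist G S ≤ H.edgeSet.ncard :=
  Nat.sInf_le ⟨H, hH, hS, rfl⟩

theorem Connected.le_steinerDist (hG : G.Connected) {S : Set V} {m : ℕ}
    (h : ∀ H : G.Subgraph, H.Connected → S ⊆ H.verts → m ≤ H.edgeSet.ncard) :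
    m ≤ steinerDist G S :=
  le_csInf ⟨_, _, hG.toSubgraph le_rfl, Set.subset_univ S, rfl⟩
    (by rintro _ ⟨H, hH, hSH, rfl⟩; exact h H hH hSH)

theorem steinerDist_singleton (u : V) : steinerDist G {u} = 0 :=
  Nat.eq_zero_of_le_zero <| (steinerDist_le_ncard (Subgraph.singletonSubgraph_connected (v := u))
    (by simp)).trans (by simp)

theorem steinerDist_triple_le_length {z u v w : V} (pu : G.Walk z u) (pv : G.Walk z v)
    (pw : G.Walk z w) : steinerDist G {u, v, w} ≤ pu.length + pv.length + pw.length := by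
  have hz : ∀ {x} (p : G.Walk z x), z ∈ p.toSubgraph.verts :=
    fun p => p.start_mem_verts_toSubgraph
  have hconn : (pu.toSubgraph ⊔ pv.toSubgraph ⊔ pw.toSubgraph).Connected :=
    Subgraph.connected_sup
      (Subgraph.connected_sup pu.toSubgraph_connected.preconnected
        pv.toSubgraph_connected.preconnected ⟨z, hz pu, hz pv⟩).preconnected
      pw.toSubgraph_connected.preconnected ⟨z, Or.inl (hz pu), hz pw⟩
  refine (steinerDist_le_ncard hconn ?_).trans ?_
  · rintro x (rfl | rfl | rfl)
    exacts [Or.inl (Or.inl pu.end_mem_verts_toSubgraph),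
      Or.inl (Or.inr pv.end_mem_verts_toSubgraph), Or.inr pw.end_mem_verts_toSubgraph]
  · simp only [Subgraph.edgeSet_sup, Walk.edgeSet_toSubgraph]
    have := Set.ncard_union_le (pu.edgeSet ∪ pv.edgeSet) pw.edgeSet
    have := Set.ncard_union_le pu.edgeSet pv.edgeSet
    have := pu.ncard_edgeSet_le_length
    have := pv.ncard_edgeSet_le_length
    have := pw.ncard_edgeSet_le_length
    omega

theorem exists_walk_pathGraph_length {n : ℕ} (i j : Fin n) (hij : i ≤ j) :
    ∃ p : (pathGraph n).Walk i j, p.length = (j : ℕ) - i := by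
  obtain ⟨d, hd⟩ := Nat.exists_eq_add_of_le (Fin.le_def.mp hij)
  induction d generalizing j with
  | zero =>
    obtain rfl : j = i := Fin.ext hd
    exact ⟨Walk.nil, by simp⟩
  | succ d ih =>
    obtain ⟨p, hp⟩ := ih ⟨i + d, by omega⟩ (Fin.le_def.mpr (by simp)) rfl
    have hadj : (pathGraph n).Adj ⟨i + d, by omega⟩ j := pathGraph_adj.mpr (by simp; omega)
    exact ⟨p.concat hadj, by simp [hp]; omega⟩

end SimpleGraph

section TripleCounting

variable {V R : Type*} [Fintype V] [DecidableEq V] [CommRing R]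

theorem image_O3 : (O3 V).image (fun t => ({t.1, t.2.1, t.2.2} : Finset V))
    = powersetCard 3 univ := by
  ext S
  simp only [mem_image, mem_powersetCard_univ, card_eq_three, O3, mem_filter, mem_univ, true_and,
    Prod.exists]
  constructor
  · rintro ⟨a, b, c, ⟨hab, hac, hbc⟩, rfl⟩
    exact ⟨a, b, c, hab, hac, hbc, rfl⟩
  · rintro ⟨a, b, c, hab, hac, hbc, rfl⟩
    exact ⟨a, b, c, ⟨hab, hac, hbc⟩, rfl⟩

theorem card_filter_O3_eq_six {S : Finset V} (hS : #S = 3) :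
    #{t ∈ O3 V | ({t.1, t.2.1, t.2.2} : Finset V) = S} = 6 := by
  obtain ⟨a, b, c, hab, hac, hbc, rfl⟩ := card_eq_three.mp hS
  have hfiber : {t ∈ O3 V | ({t.1, t.2.1, t.2.2} : Finset V) = {a, b, c}}
      = {(a, b, c), (a, c, b), (b, a, c), (b, c, a), (c, a, b), (c, b, a)} := by
    ext ⟨x, y, z⟩
    simp only [O3, filter_filter, mem_filter, mem_univ, true_and, mem_insert, mem_singleton,
      Prod.mk.injEq]
    constructor
    · rintro ⟨⟨hxy, hxz, hyz⟩, hS⟩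
      have hmem : ∀ t ∈ ({x, y, z} : Finset V), t = a ∨ t = b ∨ t = c := by
        intro t ht; rw [hS] at ht; simpa using ht
      rcases hmem x (by simp) with rfl | rfl | rfl <;>
        rcases hmem y (by simp) with rfl | rfl | rfl <;>
        rcases hmem z (by simp) with rfl | rfl | rfl <;> simp_all
    · rintro (⟨rfl, rfl, rfl⟩ | ⟨rfl, rfl, rfl⟩ | ⟨rfl, rfl, rfl⟩ | ⟨rfl, rfl, rfl⟩ |
        ⟨rfl, rfl, rfl⟩ | ⟨rfl, rfl, rfl⟩) <;>
        refine ⟨by tauto, ?_⟩ <;> ext <;> simp <;> tauto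
  rw [hfiber]
  simp [hab, hac, hbc, hab.symm, hac.symm, hbc.symm]

theorem sum_O3_eq_six_mul_sum_powersetCard (F : Finset V → R) :
    ∑ t ∈ O3 V, F {t.1, t.2.1, t.2.2} = 6 * ∑ S ∈ powersetCard 3 univ, F S := by
  rw [Finset.sum_comp, image_O3, mul_sum]
  refine sum_congr rfl fun S hS => ?_
  rw [card_filter_O3_eq_six (mem_powersetCard_univ.mp hS), nsmul_eq_mul, Nat.cast_ofNat]

theorem sum_O3_eq_inclusion_exclusion (F : Finset V → R) :
    ∑ t ∈ O3 V, F {t.1, t.2.1, t.2.2}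
      = ∑ u, ∑ v, ∑ w, F {u, v, w} - 3 * ∑ u, ∑ v, F {u, v} + 2 * ∑ u, F {u} := by
  have hpoint : ∀ u v w : V, (if u ≠ v ∧ u ≠ w ∧ v ≠ w then F {u, v, w} else 0)
      = F {u, v, w} - (if u = v then F {u, w} else 0) - (if u = w then F {u, v} else 0)
        - (if v = w then F {u, v} else 0)
        + 2 * (if u = v then if v = w then F {u} else 0 else 0) := by
    intro u v w
    split_ifs <;> simp_all [pair_comm]
    ring
  rw [O3, sum_filter, Fintype.sum_prod_type]
  simp only [Fintype.sum_prod_type, hpoint, sum_add_distrib, sum_sub_distrib, ← mul_sum]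
  simp only [sum_ite_irrel, sum_const_zero, sum_ite_eq, mem_univ, if_true]
  ring

theorem six_mul_sum_powersetCard_three (F : Finset V → R) :
    6 * ∑ S ∈ powersetCard 3 univ, F S
      = ∑ u, ∑ v, ∑ w, F {u, v, w} - 3 * ∑ u, ∑ v, F {u, v} + 2 * ∑ u, F {u} := by
  rw [← sum_O3_eq_six_mul_sum_powersetCard, sum_O3_eq_inclusion_exclusion]

end TripleCounting

def hyperWienerTerm (d : ℕ) : ℝ := d + d ^ 2

theorem twelve_mul_SWW_three {V : Type*} [Fintype V] [DecidableEq V] (G : SimpleGraph V) :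
    12 * SWW 3 G = ∑ u, ∑ v, ∑ w, hyperWienerTerm (steinerDist G {u, v, w})
      - 3 * ∑ u, ∑ v, hyperWienerTerm (steinerDist G {u, v}) := by
  have h := six_mul_sum_powersetCard_three
    (fun S : Finset V => hyperWienerTerm (steinerDist G (S : Set V)))
  have h0 : hyperWienerTerm 0 = 0 := by simp [hyperWienerTerm]
  simp only [coe_insert, coe_singleton, steinerDist_singleton, h0, sum_const_zero, mul_zero,
    add_zero] at h
  rw [← h, SWW]
  simp only [hyperWienerTerm, sum_add_distrib]
  ring

def span3 (x y z : ℕ) : ℕ := max x (max y z) - min x (min y z)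

section SpanSums

variable {M : Type*} [AddCommMonoid M]

theorem sum_range_succ_cube (f : ℕ → ℕ → ℕ → M) (N : ℕ) :
    ∑ x ∈ range (N + 1), ∑ y ∈ range (N + 1), ∑ z ∈ range (N + 1), f x y z
      = ∑ x ∈ range N, ∑ y ∈ range N, ∑ z ∈ range N, f (x + 1) (y + 1) (z + 1)
        + ∑ x ∈ range N, ∑ y ∈ range N,
            (f 0 (x + 1) (y + 1) + f (x + 1) 0 (y + 1) + f (x + 1) (y + 1) 0)
        + ∑ x ∈ range N, (f 0 0 (x + 1) + f 0 (x + 1) 0 + f (x + 1) 0 0) + f 0 0 0 := by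
  simp only [sum_range_succ', sum_add_distrib]
  abel

theorem sum_span3_succ (g : ℕ → M) (N : ℕ) :
    ∑ x ∈ range (N + 1), ∑ y ∈ range (N + 1), ∑ z ∈ range (N + 1), g (span3 x y z)
      = ∑ x ∈ range N, ∑ y ∈ range N, ∑ z ∈ range N, g (span3 x y z)
        + 3 • ∑ x ∈ range N, ∑ y ∈ range N, g (max x y + 1)
        + 3 • ∑ x ∈ range N, g (x + 1) + g 0 := by
  have hface : ∀ x y, span3 0 (x + 1) (y + 1) = max x y + 1 ∧ span3 (x + 1) 0 (y + 1) = max x y + 1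
      ∧ span3 (x + 1) (y + 1) 0 = max x y + 1 := by intro x y; simp only [span3]; omega
  have hedge : ∀ x, span3 0 0 (x + 1) = x + 1 ∧ span3 0 (x + 1) 0 = x + 1
      ∧ span3 (x + 1) 0 0 = x + 1 := by intro x; simp only [span3]; omega
  have hshift : ∀ x y z, span3 (x + 1) (y + 1) (z + 1) = span3 x y z := by
    intro x y z; simp only [span3]; omega
  rw [sum_range_succ_cube]
  simp only [hface, hedge, hshift, show span3 0 0 0 = 0 from rfl, sum_add_distrib, succ_nsmul,
    zero_nsmul, zero_add]

theorem sum_span3_pair_succ (g : ℕ → M) (N : ℕ) :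
    ∑ x ∈ range (N + 1), ∑ y ∈ range (N + 1), g (span3 x x y)
      = ∑ x ∈ range N, ∑ y ∈ range N, g (span3 x x y) + 2 • ∑ x ∈ range N, g (x + 1) + g 0 := by
  have hedge : ∀ x, span3 0 0 (x + 1) = x + 1 ∧ span3 (x + 1) (x + 1) 0 = x + 1 := by
    intro x; simp only [span3]; omega
  have hshift : ∀ x y, span3 (x + 1) (x + 1) (y + 1) = span3 x x y := by
    intro x y; simp only [span3]; omega
  simp only [sum_range_succ', hedge, hshift, show span3 0 0 0 = 0 from rfl, sum_add_distrib,
    two_nsmul]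
  abel

theorem sum_max_succ (h : ℕ → M) (N : ℕ) :
    ∑ x ∈ range (N + 1), ∑ y ∈ range (N + 1), h (max x y)
      = ∑ x ∈ range N, ∑ y ∈ range N, h (max x y) + (2 * N + 1) • h N := by
  have hx : ∀ x ∈ range N, h (max x N) = h N := fun x hx =>
    congrArg h (max_eq_right (mem_range.mp hx).le)
  have hy : ∀ y ∈ range (N + 1), h (max N y) = h N := fun y hy =>
    congrArg h (max_eq_left (mem_range_succ_iff.mp hy))
  rw [sum_range_succ, sum_congr rfl hy, sum_congr rfl fun x _ => sum_range_succ _ N,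
    sum_add_distrib, sum_congr rfl hx, sum_const, sum_const, card_range, card_range, add_assoc,
    ← add_nsmul]
  ring_nf

end SpanSums

theorem sum_range_add_one_cast (N : ℕ) :
    ∑ x ∈ range N, ((x + 1 : ℕ) : ℝ) = ((N : ℝ) ^ 2 + N) / 2 := by
  induction N with
  | zero => simp
  | succ N ih => rw [sum_range_succ, ih]; push_cast; ring

theorem sum_range_add_one_cast_sq (N : ℕ) :
    ∑ x ∈ range N, ((x + 1 : ℕ) : ℝ) ^ 2 = (2 * (N : ℝ) ^ 3 + 3 * (N : ℝ) ^ 2 + N) / 6 := by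
  induction N with
  | zero => simp
  | succ N ih => rw [sum_range_succ, ih]; push_cast; ring

theorem sum_max_add_one_cast (N : ℕ) :
    ∑ x ∈ range N, ∑ y ∈ range N, ((max x y + 1 : ℕ) : ℝ)
      = (4 * (N : ℝ) ^ 3 + 3 * (N : ℝ) ^ 2 - N) / 6 := by
  induction N with
  | zero => simp
  | succ N ih =>
    rw [sum_max_succ (fun t => ((t + 1 : ℕ) : ℝ)), ih, nsmul_eq_mul]
    push_cast; ring

theorem sum_max_add_one_cast_sq (N : ℕ) :
    ∑ x ∈ range N, ∑ y ∈ range N, ((max x y + 1 : ℕ) : ℝ) ^ 2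
      = (3 * (N : ℝ) ^ 4 + 4 * (N : ℝ) ^ 3 - N) / 6 := by
  induction N with
  | zero => simp
  | succ N ih =>
    rw [sum_max_succ (fun t => ((t + 1 : ℕ) : ℝ) ^ 2), ih, nsmul_eq_mul]
    push_cast; ring

theorem sum_span3_cast (N : ℕ) :
    ∑ x ∈ range N, ∑ y ∈ range N, ∑ z ∈ range N, (span3 x y z : ℝ)
      = ((N : ℝ) ^ 4 - (N : ℝ) ^ 2) / 2 := by
  induction N with
  | zero => simp
  | succ N ih =>
    rw [sum_span3_succ (fun t => (t : ℝ)), ih, sum_max_add_one_cast, sum_range_add_one_cast,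
      nsmul_eq_mul, nsmul_eq_mul]
    push_cast; ring

theorem sum_span3_cast_sq (N : ℕ) :
    ∑ x ∈ range N, ∑ y ∈ range N, ∑ z ∈ range N, (span3 x y z : ℝ) ^ 2
      = (3 * (N : ℝ) ^ 5 - 5 * (N : ℝ) ^ 3 + 2 * N) / 10 := by
  induction N with
  | zero => simp
  | succ N ih =>
    rw [sum_span3_succ (fun t => (t : ℝ) ^ 2), ih, sum_max_add_one_cast_sq,
      sum_range_add_one_cast_sq, nsmul_eq_mul, nsmul_eq_mul]
    push_cast; ring

theorem sum_span3_pair_cast (N : ℕ) :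
    ∑ x ∈ range N, ∑ y ∈ range N, (span3 x x y : ℝ) = ((N : ℝ) ^ 3 - N) / 3 := by
  induction N with
  | zero => simp
  | succ N ih =>
    rw [sum_span3_pair_succ (fun t => (t : ℝ)), ih, sum_range_add_one_cast, nsmul_eq_mul]
    push_cast; ring

theorem sum_span3_pair_cast_sq (N : ℕ) :
    ∑ x ∈ range N, ∑ y ∈ range N, (span3 x x y : ℝ) ^ 2 = ((N : ℝ) ^ 4 - (N : ℝ) ^ 2) / 6 := by
  induction N with
  | zero => simp
  | succ N ih =>
    rw [sum_span3_pair_succ (fun t => (t : ℝ) ^ 2), ih, sum_range_add_one_cast_sq, nsmul_eq_mul]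
    push_cast; ring

abbrev ladderGraph (n : ℕ) : SimpleGraph (Fin 2 × Fin n) := pathGraph 2 □ pathGraph n

def ladderSteinerDist {n : ℕ} (u v w : Fin 2 × Fin n) : ℕ :=
  span3 u.2 v.2 w.2 + if u.1 = v.1 ∧ v.1 = w.1 then 0 else 1

namespace ladderGraph

variable {n : ℕ}

theorem adj_iff {p q : Fin 2 × Fin n} : (ladderGraph n).Adj p q ↔
    p.1 ≠ q.1 ∧ p.2 = q.2 ∨ p.1 = q.1 ∧ ((p.2 : ℕ) + 1 = q.2 ∨ (q.2 : ℕ) + 1 = p.2) := by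
  rw [boxProd_adj, pathGraph_two_eq_top, top_adj, pathGraph_adj]
  exact or_congr_right and_comm

theorem exists_walk (p q : Fin 2 × Fin n) : ∃ w : (ladderGraph n).Walk p q,
    w.length = max (p.2 : ℕ) q.2 - min (p.2 : ℕ) q.2 + if p.1 = q.1 then 0 else 1 := by
  obtain ⟨a, i⟩ := p
  obtain ⟨b, j⟩ := q
  obtain ⟨r, hr⟩ : ∃ r : (pathGraph n).Walk i j, r.length = max (i : ℕ) j - min (i : ℕ) j := by
    rcases le_total i j with h | h
    · obtain ⟨r, hr⟩ := exists_walk_pathGraph_length i j h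
      exact ⟨r, by rw [hr]; omega⟩
    · obtain ⟨r, hr⟩ := exists_walk_pathGraph_length j i h
      exact ⟨r.reverse, by rw [Walk.length_reverse, hr]; omega⟩
  have hrow : (r.boxProdRight (pathGraph 2) a).length = r.length := Walk.length_map _ _
  by_cases hab : a = b
  · subst hab
    exact ⟨r.boxProdRight (pathGraph 2) a, by simp [hrow, hr]⟩
  · have hrung : (ladderGraph n).Adj (a, j) (b, j) := adj_iff.mpr (Or.inl ⟨hab, rfl⟩)
    exact ⟨(r.boxProdRight (pathGraph 2) a).concat hrung, by simp [hrow, hr, hab]⟩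

theorem steinerDist_le (u v w : Fin 2 × Fin n) :
    steinerDist (ladderGraph n) {u, v, w} ≤ ladderSteinerDist u v w := by
  obtain ⟨a, i⟩ := u
  obtain ⟨b, j⟩ := v
  obtain ⟨c, k⟩ := w
  -- route all three vertices through a median column, in the majority row
  let hub : Fin 2 × Fin n :=
    (if b = c then b else a, ⟨max (min i j) (max (min j k) (min i k)), by omega⟩)
  obtain ⟨pu, hpu⟩ := exists_walk hub (a, i)
  obtain ⟨pv, hpv⟩ := exists_walk hub (b, j)
  obtain ⟨pw, hpw⟩ := exists_walk hub (c, k)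
  have hrows : ∀ a b c : Fin 2, ((if (if b = c then b else a) = a then 0 else 1)
      + (if (if b = c then b else a) = b then 0 else 1)
      + (if (if b = c then b else a) = c then 0 else 1) : ℕ)
      = if a = b ∧ b = c then 0 else 1 := by decide
  refine (SimpleGraph.steinerDist_triple_le_length pu pv pw).trans (le_of_eq ?_)
  have := hrows a b c
  simp only [hub] at hpu hpv hpw
  rw [hpu, hpv, hpw, ladderSteinerDist, span3]
  dsimp only
  omega

theorem exists_edge_between_columns {H : (ladderGraph n).Subgraph} (hH : H.Connected)
    {a b : Fin 2 × Fin n} (ha : a ∈ H.verts) (hb : b ∈ H.verts) {k : ℕ} (hak : (a.2 : ℕ) ≤ k)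
    (hkb : k < b.2) : ∃ x y, s(x, y) ∈ H.edgeSet ∧ (x.2 : ℕ) = k ∧ (y.2 : ℕ) = k + 1 := by
  obtain ⟨p, hp⟩ := hH.preconnected.exists_walk_edges_subset ha hb
  obtain ⟨x, y, hxy, hx, hy⟩ := p.exists_mem_edges_le_lt (fun q => (q.2 : ℕ)) k hak hkb
  have := adj_iff.mp (p.adj_of_mem_edges hxy)
  refine ⟨x, y, hp _ hxy, ?_, ?_⟩ <;> grind

theorem exists_rung {H : (ladderGraph n).Subgraph} (hH : H.Connected) {a b : Fin 2 × Fin n}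
    (ha : a ∈ H.verts) (hb : b ∈ H.verts) (hab : a.1 ≠ b.1) :
    ∃ x y, s(x, y) ∈ H.edgeSet ∧ (x.2 : ℕ) = y.2 := by
  obtain ⟨p, hp⟩ := hH.preconnected.exists_walk_edges_subset ha hb
  obtain ⟨x, y, hxy, hne⟩ := p.exists_mem_edges_ne Prod.fst hab
  have := adj_iff.mp (p.adj_of_mem_edges hxy)
  exact ⟨x, y, hp _ hxy, by grind⟩

theorem exists_horizontal_edges {H : (ladderGraph n).Subgraph} (hH : H.Connected)
    {a b : Fin 2 × Fin n} (ha : a ∈ H.verts) (hb : b ∈ H.verts) :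
    ∃ F : Finset (Sym2 (Fin 2 × Fin n)), (F : Set _) ⊆ H.edgeSet ∧ #F = (b.2 : ℕ) - a.2 ∧
      ∀ x y, s(x, y) ∈ F → (x.2 : ℕ) ≠ y.2 := by
  have : Nonempty (Fin 2 × Fin n) := ⟨a⟩
  have hgap : ∀ k ∈ Ico (a.2 : ℕ) b.2,
      ∃ x y, s(x, y) ∈ H.edgeSet ∧ (x.2 : ℕ) = k ∧ (y.2 : ℕ) = k + 1 := fun k hk =>
    exists_edge_between_columns hH ha hb (mem_Ico.mp hk).1 (mem_Ico.mp hk).2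
  choose! x y hxy hx hy using hgap
  refine ⟨(Ico (a.2 : ℕ) b.2).image fun k => s(x k, y k), ?_, ?_, ?_⟩
  · simp only [coe_image]
    rintro _ ⟨k, hk, rfl⟩
    exact hxy k hk
  · rw [card_image_of_injOn, Nat.card_Ico]
    intro k hk k' hk' heq
    have := hx k hk; have := hy k hk; have := hx k' hk'; have := hy k' hk'
    rcases Sym2.eq_iff.mp heq with ⟨h1, h2⟩ | ⟨h1, h2⟩ <;> simp only [h1, h2] at * <;> omega
  · simp only [mem_image]
    rintro _ _ ⟨k, hk, heq⟩
    have := hx k hk; have := hy k hk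
    rcases Sym2.eq_iff.mp heq with ⟨rfl, rfl⟩ | ⟨rfl, rfl⟩ <;> omega

theorem le_ncard_edgeSet {H : (ladderGraph n).Subgraph} (hH : H.Connected)
    {u v w : Fin 2 × Fin n} (hS : ({u, v, w} : Set (Fin 2 × Fin n)) ⊆ H.verts) :
    ladderSteinerDist u v w ≤ H.edgeSet.ncard := by
  have hu : u ∈ H.verts := hS (by simp)
  have hv : v ∈ H.verts := hS (by simp)
  have hw : w ∈ H.verts := hS (by simp)
  set lo := min (u.2 : ℕ) (min v.2 w.2)
  set hi := max (u.2 : ℕ) (max v.2 w.2)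
  obtain ⟨a, ha, hacol⟩ : ∃ a ∈ H.verts, (a.2 : ℕ) = lo := by
    rcases (by omega : lo = u.2 ∨ lo = v.2 ∨ lo = w.2) with h | h | h
    exacts [⟨u, hu, h.symm⟩, ⟨v, hv, h.symm⟩, ⟨w, hw, h.symm⟩]
  obtain ⟨b, hb, hbcol⟩ : ∃ b ∈ H.verts, (b.2 : ℕ) = hi := by
    rcases (by omega : hi = u.2 ∨ hi = v.2 ∨ hi = w.2) with h | h | h
    exacts [⟨u, hu, h.symm⟩, ⟨v, hv, h.symm⟩, ⟨w, hw, h.symm⟩]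
  obtain ⟨F, hFsub, hFcard, hFcol⟩ := exists_horizontal_edges hH ha hb
  unfold ladderSteinerDist span3
  split_ifs with hrow
  · calc _ = #F := by omega
      _ ≤ H.edgeSet.ncard := by
        rw [← Set.ncard_coe_finset]; exact Set.ncard_le_ncard hFsub (Set.toFinite _)
  · obtain ⟨c, hc, d, hd, hcd⟩ : ∃ c ∈ H.verts, ∃ d ∈ H.verts, c.1 ≠ d.1 := by
      by_cases huv : u.1 = v.1
      · exact ⟨v, hv, w, hw, fun hvw => hrow ⟨huv, hvw⟩⟩
      · exact ⟨u, hu, v, hv, huv⟩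
    obtain ⟨r, r', hrr', hcol⟩ := exists_rung hH hc hd hcd
    have hnotin : s(r, r') ∉ F := fun h => hFcol r r' h hcol
    calc _ = #(insert s(r, r') F) := by rw [card_insert_of_notMem hnotin]; omega
      _ ≤ H.edgeSet.ncard := by
        rw [← Set.ncard_coe_finset, coe_insert]
        exact Set.ncard_le_ncard (Set.insert_subset hrr' hFsub) (Set.toFinite _)

theorem steinerDist_eq (u v w : Fin 2 × Fin n) :
    steinerDist (ladderGraph n) {u, v, w} = ladderSteinerDist u v w := by
  obtain ⟨m, rfl⟩ := Nat.exists_eq_add_one_of_ne_zero (Fin.pos u.2).ne'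
  have hconn : (ladderGraph (m + 1)).Connected :=
    (pathGraph_connected 1).boxProd (pathGraph_connected m)
  exact le_antisymm (steinerDist_le u v w)
    (hconn.le_steinerDist fun _ hH hS => le_ncard_edgeSet hH hS)

theorem sum_ladderSteinerDist {M : Type*} [AddCommMonoid M] (φ : ℕ → M) :
    ∑ u : Fin 2 × Fin n, ∑ v, ∑ w, φ (ladderSteinerDist u v w)
      = 2 • ∑ x ∈ range n, ∑ y ∈ range n, ∑ z ∈ range n, φ (span3 x y z)
        + 6 • ∑ x ∈ range n, ∑ y ∈ range n, ∑ z ∈ range n, φ (span3 x y z + 1) := by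
  simp [Fintype.sum_prod_type, Fin.sum_univ_two, ladderSteinerDist, sum_range, sum_add_distrib]
  abel

theorem sum_ladderSteinerDist_pair {M : Type*} [AddCommMonoid M] (φ : ℕ → M) :
    ∑ u : Fin 2 × Fin n, ∑ v, φ (ladderSteinerDist u u v)
      = 2 • ∑ x ∈ range n, ∑ y ∈ range n, φ (span3 x x y)
        + 2 • ∑ x ∈ range n, ∑ y ∈ range n, φ (span3 x x y + 1) := by
  simp [Fintype.sum_prod_type, Fin.sum_univ_two, ladderSteinerDist, sum_range, sum_add_distrib]
  abel

theorem twelve_mul_SWW (n : ℕ) :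
    12 * SWW 3 (ladderGraph n)
      = ∑ u : Fin 2 × Fin n, ∑ v, ∑ w, hyperWienerTerm (ladderSteinerDist u v w)
        - 3 * ∑ u : Fin 2 × Fin n, ∑ v, hyperWienerTerm (ladderSteinerDist u u v) := by
  have hpair : ∀ u v : Fin 2 × Fin n,
      steinerDist (ladderGraph n) {u, v} = ladderSteinerDist u u v := by
    intro u v
    rw [← steinerDist_eq, Set.insert_eq_of_mem (Set.mem_insert u _)]
  simp only [twelve_mul_SWW_three, steinerDist_eq, hpair]

end ladderGraph

theorem steiner_three_hyper_wiener_ladder_general (n : ℕ) :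
    SWW 3 (SimpleGraph.pathGraph 2 □ SimpleGraph.pathGraph n)
      = 1 / 15 * (3 * (n : ℝ) ^ 5 + 10 * (n : ℝ) ^ 4 - 25 * (n : ℝ) ^ 2 + 12 * (n : ℝ)) := by
  have h := ladderGraph.twelve_mul_SWW n
  have hsucc : ∀ d : ℕ, hyperWienerTerm (d + 1) = (d : ℝ) ^ 2 + 3 * d + 2 := by
    intro d; simp only [hyperWienerTerm]; push_cast; ring
  rw [ladderGraph.sum_ladderSteinerDist, ladderGraph.sum_ladderSteinerDist_pair] at h
  simp only [hsucc] at h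
  simp only [hyperWienerTerm, sum_add_distrib, ← mul_sum, sum_const, card_range, nsmul_eq_mul] at h
  rw [sum_span3_cast, sum_span3_cast_sq, sum_span3_pair_cast, sum_span3_pair_cast_sq] at h
  linear_combination h / 12

/-- Steiner 3-hyper-Wiener index of the grid graph `G_{2,n} = P_2 □ P_n`, `n ≥ 3`:
`SWW₃(G_{2,n}) = (1/15)(3n⁵ + 10n⁴ − 25n² + 12n)`. -/
theorem steiner_three_hyper_wiener_ladder (n : ℕ) (hn : 3 ≤ n) :
    SWW 3 (SimpleGraph.pathGraph 2 □ SimpleGraph.pathGraph n)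
      = 1 / 15 * (3 * (n : ℝ) ^ 5 + 10 * (n : ℝ) ^ 4 - 25 * (n : ℝ) ^ 2 + 12 * (n : ℝ)) :=
  steiner_three_hyper_wiener_ladder_general n
end
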